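/- arXiv:1305.0535 — 4 statements merged into one kernel-verified Lean document; each statement's English description precedes it below -/
import Mathlib

section
/- Let X be a set and P : Set X → ℝ be a submodular functional, i.e. P(E₁ ∪ E₂) + P(E₁ ∩ E₂) ≤ P(E₁) + P(E₂) for all E₁, E₂ ⊆ X. Fix Ω ⊆ X and suppose E₁ minimizes P over 𝒜₁ := { F : F ∩ Ωᶜ = E₁ ∩ Ωᶜ } and E₂ minimizes P over 𝒜₂ := { F : F ∩ Ωᶜ = E₂ ∩ Ωᶜ }. If E₁ ∩ Ωᶜ ⊆ E₂ ∩ Ωᶜ, then E₁ ∩ E₂ minimizes P over 𝒜₁ and E₁ ∪ E₂ minimizes P over 𝒜₂. -/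
/-! If `E₁ ∩ E₂` and `E₁ ∪ E₂` have the exterior traces of `E₁` and `E₂` respectively, minimality
gives `P E₁ ≤ P (E₁ ∩ E₂)` and `P E₂ ≤ P (E₁ ∪ E₂)`, while submodularity bounds the sum of the
right-hand sides by the sum of the left-hand sides; hence both inequalities are equalities. -/

section TraceOrder

variable {α : Type*} {a b c : α}

theorem inf_inf_eq_of_inf_le_inf [SemilatticeInf α] (h : a ⊓ c ≤ b ⊓ c) :
    a ⊓ b ⊓ c = a ⊓ c :=
  le_antisymm (inf_le_inf_right c inf_le_left)
    (le_inf (le_inf inf_le_left (h.trans inf_le_left)) inf_le_right)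

theorem sup_inf_eq_of_inf_le_inf [DistribLattice α] (h : a ⊓ c ≤ b ⊓ c) :
    (a ⊔ b) ⊓ c = b ⊓ c := by
  rw [inf_sup_right, sup_eq_right.mpr h]

end TraceOrder

section Submodular

variable {α β : Type*} [AddCommMonoid β] [PartialOrder β] [IsOrderedCancelAddMonoid β]
  {P : α → β}

theorem eq_of_submodular_of_le [Lattice α] {a b : α}
    (hsub : P (a ⊔ b) + P (a ⊓ b) ≤ P a + P b) (ha : P a ≤ P (a ⊓ b)) (hb : P b ≤ P (a ⊔ b)) :
    P (a ⊓ b) = P a ∧ P (a ⊔ b) = P b := by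
  have hsum : P a + P b = P (a ⊓ b) + P (a ⊔ b) :=
    le_antisymm (add_le_add ha hb) (by rwa [add_comm])
  obtain ⟨hinf, hsup⟩ := (add_eq_add_iff_eq_and_eq ha hb).mp hsum
  exact ⟨hinf.symm, hsup.symm⟩

theorem isMinOn_inf_sup_of_submodular [DistribLattice α]
    (hsub : ∀ a b, P (a ⊔ b) + P (a ⊓ b) ≤ P a + P b) {a b c : α}
    (ha : IsMinOn P {x | x ⊓ c = a ⊓ c} a) (hb : IsMinOn P {x | x ⊓ c = b ⊓ c} b)
    (hab : a ⊓ c ≤ b ⊓ c) :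
    IsMinOn P {x | x ⊓ c = a ⊓ c} (a ⊓ b) ∧ IsMinOn P {x | x ⊓ c = b ⊓ c} (a ⊔ b) := by
  obtain ⟨hinf, hsup⟩ := eq_of_submodular_of_le (hsub a b)
    (ha (inf_inf_eq_of_inf_le_inf hab)) (hb (sup_inf_eq_of_inf_le_inf hab))
  exact ⟨fun x hx => hinf ▸ ha hx, fun x hx => hsup ▸ hb hx⟩

end Submodular

/-- for a submodular set functional `P`, if `E₁, E₂` minimize `P` among sets
with their respective exterior traces and `E₁ ∩ Ωᶜ ⊆ E₂ ∩ Ωᶜ`, then `E₁ ∩ E₂` and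
`E₁ ∪ E₂` are again minimizers over the respective classes. -/
theorem stmt4 {X : Type*} (P : Set X → ℝ)
    (hsub : ∀ E₁ E₂ : Set X, P (E₁ ∪ E₂) + P (E₁ ∩ E₂) ≤ P E₁ + P E₂)
    (Ω E₁ E₂ : Set X)
    (hmin1 : ∀ F : Set X, F ∩ Ωᶜ = E₁ ∩ Ωᶜ → P E₁ ≤ P F)
    (hmin2 : ∀ F : Set X, F ∩ Ωᶜ = E₂ ∩ Ωᶜ → P E₂ ≤ P F)
    (hnest : E₁ ∩ Ωᶜ ⊆ E₂ ∩ Ωᶜ) :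
    ((E₁ ∩ E₂) ∩ Ωᶜ = E₁ ∩ Ωᶜ ∧ ∀ F : Set X, F ∩ Ωᶜ = E₁ ∩ Ωᶜ → P (E₁ ∩ E₂) ≤ P F) ∧
    ((E₁ ∪ E₂) ∩ Ωᶜ = E₂ ∩ Ωᶜ ∧ ∀ F : Set X, F ∩ Ωᶜ = E₂ ∩ Ωᶜ → P (E₁ ∪ E₂) ≤ P F) := by
  obtain ⟨hinf, hsup⟩ := isMinOn_inf_sup_of_submodular hsub hmin1 hmin2 hnest
  exact ⟨⟨inf_inf_eq_of_inf_le_inf hnest, hinf⟩, ⟨sup_inf_eq_of_inf_le_inf hnest, hsup⟩⟩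
end

section
/- Let Ω ⊂ ℝⁿ be a bounded open set with C¹ boundary, let a : closure(Ω) → ℝ be continuous, and let J : closure(Ω) → ℝⁿ be a C¹ vector field with div J = 0 in Ω and |J(x)| = a(x) for all x. Suppose u ∈ C¹(closure(Ω)) satisfies J(x)·∇u(x) = a(x)|∇u(x)| for all x ∈ Ω. Then for every w ∈ C¹(closure(Ω)) with w = u on ∂Ω, one has ∫_Ω a|∇u| dx ≤ ∫_Ω a|∇w| dx. -/
/-!
For a competitor `w`, Cauchy–Schwarz and `|J| = a` give `J·∇w ≤ a|∇w|`, with equality for `u`,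
so it suffices to show `∫_Ω J·∇v = 0` for `v = w - u`, which vanishes on `∂Ω`. Instead of the
divergence theorem on `Ω`, integrate `div (η_ε(v) J) = η_ε'(v) J·∇v` over the whole space, where
`η_ε` is `C¹` and vanishes on `[-ε, ε]`, so that `η_ε(v) J` is compactly supported in `Ω`. As
`ε → 0`, `η_ε'(v) → 1` off `{v = 0}`, while `∇v = 0` almost everywhere on `{v = 0}`: a zero of `v`
with `∇v ≠ 0` cannot be a Lebesgue density point of the zero set.
-/

open MeasureTheory Set Metric Filter Topology RealInnerProductSpace

namespace Calibration

section Ramp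

noncomputable def ramp (ε t : ℝ) : ℝ := min 1 (max 0 (|t| / ε - 1))

noncomputable def rampPrimitive (ε t : ℝ) : ℝ := ∫ s in (0 : ℝ)..t, ramp ε s

variable {ε : ℝ}

lemma continuous_ramp : Continuous (ramp ε) := by
  unfold ramp; fun_prop

lemma ramp_nonneg (t : ℝ) : 0 ≤ ramp ε t := le_min zero_le_one (le_max_left _ _)

lemma ramp_le_one (t : ℝ) : ramp ε t ≤ 1 := min_le_left _ _

lemma ramp_eq_zero (hε : 0 < ε) {t : ℝ} (ht : |t| ≤ ε) : ramp ε t = 0 := by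
  have : |t| / ε - 1 ≤ 0 := by rw [sub_nonpos, div_le_one hε]; exact ht
  simp [ramp, max_eq_left this]

lemma ramp_eq_one (hε : 0 < ε) {t : ℝ} (ht : 2 * ε ≤ |t|) : ramp ε t = 1 := by
  have : 1 ≤ |t| / ε - 1 := by rw [le_sub_iff_add_le, le_div_iff₀ hε]; linarith
  simp [ramp, max_eq_right (zero_le_one.trans this), min_eq_left this]

lemma tendsto_ramp {t : ℝ} (ht : t ≠ 0) : Tendsto (ramp · t) (𝓝[>] 0) (𝓝 1) := by
  refine tendsto_const_nhds.congr' ?_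
  filter_upwards [Ioo_mem_nhdsGT (half_pos (abs_pos.2 ht))] with ε hε
  exact (ramp_eq_one hε.1 (by linarith [hε.2])).symm

lemma hasDerivAt_rampPrimitive (t : ℝ) : HasDerivAt (rampPrimitive ε) (ramp ε t) t :=
  intervalIntegral.integral_hasDerivAt_right (continuous_ramp.intervalIntegrable _ _)
    (continuous_ramp.stronglyMeasurableAtFilter _ _) continuous_ramp.continuousAt

lemma contDiff_rampPrimitive : ContDiff ℝ 1 (rampPrimitive ε) := by
  refine contDiff_one_iff_deriv.2
    ⟨fun t => (hasDerivAt_rampPrimitive t).differentiableAt, ?_⟩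
  simpa only [funext fun t => (hasDerivAt_rampPrimitive (ε := ε) t).deriv] using
    continuous_ramp

lemma rampPrimitive_eq_zero (hε : 0 < ε) {t : ℝ} (ht : |t| ≤ ε) : rampPrimitive ε t = 0 := by
  have : EqOn (ramp ε) 0 (uIcc 0 t) := fun s hs =>
    ramp_eq_zero hε ((by simpa using abs_sub_left_of_mem_uIcc hs : |s| ≤ |t|).trans ht)
  simp [rampPrimitive, intervalIntegral.integral_congr this]

end Ramp

section CriticalZeros

variable {E : Type*} [NormedAddCommGroup E] [NormedSpace ℝ E]

lemma apply_add_smul_ne_zero_of_norm_fderiv_sub_le {f : E → ℝ} {L : E →L[ℝ] ℝ} {x z : E}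
    {r₀ δ r : ℝ} (hf : ∀ y ∈ ball x r₀, DifferentiableAt ℝ f y)
    (hL : ∀ y ∈ ball x r₀, ‖fderiv ℝ f y - L‖ ≤ δ) (hfx : f x = 0) (hr : 0 < r) (hr₀ : r ≤ r₀)
    (hz : ‖z‖ < 1) (hδz : δ * ‖z‖ < L z) :
    f (x + r • z) ≠ 0 := by
  have hy : x + r • z ∈ ball x r₀ := by
    rw [mem_ball, dist_eq_norm, add_sub_cancel_left, norm_smul, Real.norm_of_nonneg hr.le]
    nlinarith [norm_nonneg z]
  have hmvt := (convex_ball x r₀).norm_image_sub_le_of_norm_fderiv_le' hf hL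
    (mem_ball_self (hr.trans_le hr₀)) hy
  rw [add_sub_cancel_left, hfx, sub_zero, map_smul, smul_eq_mul, norm_smul,
    Real.norm_of_nonneg hr.le, Real.norm_eq_abs] at hmvt
  have : 0 < f (x + r • z) := by
    nlinarith [neg_abs_le (f (x + r • z) - r * L z)]
  exact this.ne'

lemma exists_norm_lt_one_apply_pos {L : E →L[ℝ] ℝ} (hL : L ≠ 0) : ∃ z : E, ‖z‖ < 1 ∧ 0 < L z := by
  obtain ⟨y, hy, hLy⟩ := L.exists_lt_apply_of_lt_opNorm (norm_pos_iff.2 hL)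
  rcases lt_abs.1 (Real.norm_eq_abs _ ▸ hLy) with h | h
  · exact ⟨y, hy, h⟩
  · exact ⟨-y, by rwa [norm_neg], by simpa using h⟩

variable [FiniteDimensional ℝ E] [MeasurableSpace E] [BorelSpace E]

theorem addHaar_setOf_eq_zero_fderiv_ne_zero (μ : Measure E) [μ.IsAddHaarMeasure] (f : E → ℝ) :
    μ {x | ContDiffAt ℝ 1 f x ∧ f x = 0 ∧ fderiv ℝ f x ≠ 0} = 0 := by
  set S := {x | ContDiffAt ℝ 1 f x ∧ f x = 0 ∧ fderiv ℝ f x ≠ 0}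
  suffices h : ∀ x ∈ S, ¬Tendsto (fun r => μ (S ∩ closedBall x r) / μ (closedBall x r))
      (𝓝[>] 0) (𝓝 1) by
    rw [← Measure.restrict_apply_self]
    exact measure_mono_null h (ae_iff.1 (Besicovitch.ae_tendsto_measure_inter_div μ S))
  -- near such a zero `x`, `f > 0` on the cone `x + r • t`, so `x` is not a density point of `S`
  rintro x ⟨hfC, hfx, hL⟩ hdens
  set L := fderiv ℝ f x
  obtain ⟨z, hz, hLz⟩ := exists_norm_lt_one_apply_pos hL
  set δ := L z / 2
  obtain ⟨r₀, hr₀, hball⟩ : ∃ r₀ > 0, ∀ y ∈ ball x r₀,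
      DifferentiableAt ℝ f y ∧ ‖fderiv ℝ f y - L‖ ≤ δ := by
    have hcont : ContinuousAt (fderiv ℝ f) x :=
      (hfC.fderiv_right (m := 0) (by norm_num)).continuousAt
    have hclose : ∀ᶠ y in 𝓝 x, ‖fderiv ℝ f y - L‖ ≤ δ := by
      have := hcont.eventually (closedBall_mem_nhds L (half_pos hLz))
      simpa [← dist_eq_norm] using this
    have hdiff : ∀ᶠ y in 𝓝 x, DifferentiableAt ℝ f y :=
      (hfC.eventually (by simp)).mono fun y hy => hy.differentiableAt one_ne_zero
    exact Metric.eventually_nhds_iff_ball.1 (hdiff.and hclose)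
  set t := {z : E | ‖z‖ < 1 ∧ δ * ‖z‖ < L z}
  have ht : IsOpen t := (isOpen_lt continuous_norm continuous_const).inter
    (isOpen_lt (continuous_const.mul continuous_norm) L.continuous)
  have hzt : z ∈ t := ⟨hz, by simp only [δ]; nlinarith [norm_nonneg z]⟩
  obtain ⟨r, ⟨hr, hrr₀⟩, y, hyS, hyt⟩ := (Filter.Eventually.and (Ioo_mem_nhdsGT hr₀)
    (Measure.eventually_nonempty_inter_smul_of_density_one μ S x hdens t ht.measurableSet
      (ht.measure_ne_zero μ ⟨z, hzt⟩))).exists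
  obtain ⟨z', ⟨hz'1, hz'2⟩, hz'⟩ : ∃ z' ∈ t, r • z' = -x + y := by
    simpa [singleton_add, mem_smul_set] using hyt
  rw [eq_neg_add_iff_add_eq] at hz'
  subst hz'
  exact apply_add_smul_ne_zero_of_norm_fderiv_sub_le (fun y hy => (hball y hy).1)
    (fun y hy => (hball y hy).2) hfx hr hrr₀.le hz'1 hz'2 hyS.2.1

end CriticalZeros

section Bounds

variable {E F : Type*} [NormedAddCommGroup E] [NormedSpace ℝ E] [NormedAddCommGroup F]
  [NormedSpace ℝ F]

theorem exists_bound_fderiv_of_contDiffOn_closure {Ω : Set E} (hΩ : IsOpen Ω)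
    (hc : IsCompact (closure Ω)) {f : E → F} (hf : ContDiffOn ℝ 1 f (closure Ω)) :
    ∃ C, ∀ x ∈ Ω, ‖fderiv ℝ f x‖ ≤ C := by
  suffices h : ∃ C, ∀ x ∈ closure Ω ∩ Ω, ‖fderiv ℝ f x‖ ≤ C by
    simpa [inter_eq_right.2 subset_closure] using h
  refine hc.induction_on (p := fun s => ∃ C, ∀ x ∈ s ∩ Ω, ‖fderiv ℝ f x‖ ≤ C) ⟨0, by simp⟩
    ?_ ?_ ?_
  · rintro s t hst ⟨C, hC⟩
    exact ⟨C, fun x hx => hC x ⟨hst hx.1, hx.2⟩⟩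
  · rintro s t ⟨C, hC⟩ ⟨D, hD⟩
    refine ⟨max C D, fun x ⟨hx, hxΩ⟩ => hx.elim (fun h => ?_) (fun h => ?_)⟩
    · exact (hC x ⟨h, hxΩ⟩).trans (le_max_left _ _)
    · exact (hD x ⟨h, hxΩ⟩).trans (le_max_right _ _)
  · intro x hx
    obtain ⟨u, hu, -, -, f', hf', hf'c⟩ :=
      (contDiffWithinAt_succ_iff_hasFDerivWithinAt' (n := 0) (by simp)).1
        (by simpa using hf x hx)
    rw [insert_eq_of_mem hx] at hu
    refine ⟨u ∩ {y | ‖f' y‖ < ‖f' x‖ + 1}, inter_mem hu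
      (hf'c.continuousWithinAt.norm.eventually (gt_mem_nhds (lt_add_one _))), ‖f' x‖ + 1, ?_⟩
    rintro y ⟨⟨hyu, hy⟩, hyΩ⟩
    rw [((hf' y hyu).hasFDerivAt (mem_of_superset (hΩ.mem_nhds hyΩ) subset_closure)).fderiv]
    exact hy.le

variable [FiniteDimensional ℝ E] [MeasurableSpace E] [BorelSpace E] {μ : Measure E} {Ω : Set E}

lemma integrableOn_of_continuousOn_of_norm_le (hΩ : MeasurableSet Ω) (hμΩ : μ Ω < ⊤)
    {G : Type*} [NormedAddCommGroup G] {g : E → G} (hg : ContinuousOn g Ω) {C : ℝ}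
    (hC : ∀ x ∈ Ω, ‖g x‖ ≤ C) : IntegrableOn g Ω μ :=
  ⟨hg.aestronglyMeasurable hΩ, .restrict_of_bounded (C := C) hμΩ
    ((ae_restrict_iff' hΩ).2 (Eventually.of_forall hC))⟩

variable [IsFiniteMeasureOnCompacts μ] {f : E → F} {J : E → E}

lemma integrableOn_fderiv_apply (hΩ : IsOpen Ω) (hΩb : Bornology.IsBounded Ω)
    (hf : ContDiffOn ℝ 1 f (closure Ω)) (hJ : ContinuousOn J (closure Ω)) :
    IntegrableOn (fun x => fderiv ℝ f x (J x)) Ω μ := by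
  obtain ⟨C, hC⟩ := exists_bound_fderiv_of_contDiffOn_closure hΩ hΩb.isCompact_closure hf
  obtain ⟨D, hD⟩ := hΩb.isCompact_closure.exists_bound_of_continuousOn hJ
  refine integrableOn_of_continuousOn_of_norm_le hΩ.measurableSet hΩb.measure_lt_top
    (C := C * D) (((hf.mono subset_closure).continuousOn_fderiv_of_isOpen hΩ le_rfl).clm_apply
      (hJ.mono subset_closure)) fun x hx => ?_
  exact (ContinuousLinearMap.le_opNorm _ _).trans (mul_le_mul (hC x hx) (hD x (subset_closure hx))
    (norm_nonneg _) ((norm_nonneg _).trans (hC x hx)))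

lemma integrableOn_norm_mul_norm_fderiv (hΩ : IsOpen Ω) (hΩb : Bornology.IsBounded Ω)
    (hf : ContDiffOn ℝ 1 f (closure Ω)) (hJ : ContinuousOn J (closure Ω)) :
    IntegrableOn (fun x => ‖J x‖ * ‖fderiv ℝ f x‖) Ω μ := by
  obtain ⟨C, hC⟩ := exists_bound_fderiv_of_contDiffOn_closure hΩ hΩb.isCompact_closure hf
  obtain ⟨D, hD⟩ := hΩb.isCompact_closure.exists_bound_of_continuousOn hJ
  refine integrableOn_of_continuousOn_of_norm_le hΩ.measurableSet hΩb.measure_lt_top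
    (C := D * C) ((hJ.mono subset_closure).norm.mul
      ((hf.mono subset_closure).continuousOn_fderiv_of_isOpen hΩ le_rfl).norm) fun x hx => ?_
  rw [norm_mul, norm_norm, norm_norm]
  exact mul_le_mul (hD x (subset_closure hx)) (hC x hx) (norm_nonneg _)
    ((norm_nonneg _).trans (hD x (subset_closure hx)))

end Bounds

lemma eventually_abs_lt_of_notMem {X : Type*} [TopologicalSpace X] {Ω : Set X} {v : X → ℝ}
    (hvc : ContinuousOn v (closure Ω)) (hv0 : ∀ x ∈ frontier Ω, v x = 0) {ε : ℝ} (hε : 0 < ε)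
    {x : X} (hx : x ∉ Ω) : ∀ᶠ y in 𝓝 x, y ∈ Ω → |v y| < ε := by
  by_cases hxc : x ∈ closure Ω
  · have hvx : v x = 0 := hv0 x ⟨hxc, fun h => hx (interior_subset h)⟩
    have := (hvc x hxc).eventually (Metric.ball_mem_nhds (v x) hε)
    rw [eventually_nhdsWithin_iff] at this
    filter_upwards [this] with y hy hyΩ
    simpa [hvx, Real.dist_eq] using hy (subset_closure hyΩ)
  · filter_upwards [isClosed_closure.isOpen_compl.mem_nhds hxc] with y hy hyΩ
    exact absurd (subset_closure hyΩ) hy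

section Divergence

variable {ι : Type*} [Fintype ι] [DecidableEq ι]

noncomputable def divergence (F : EuclideanSpace ℝ ι → EuclideanSpace ℝ ι)
    (x : EuclideanSpace ℝ ι) : ℝ :=
  ∑ i, fderiv ℝ (fun y => F y i) x (EuclideanSpace.single i 1)

variable {F : EuclideanSpace ℝ ι → EuclideanSpace ℝ ι} {x : EuclideanSpace ℝ ι}

lemma _root_.Filter.EventuallyEq.divergence_eq {G : EuclideanSpace ℝ ι → EuclideanSpace ℝ ι}
    (h : F =ᶠ[𝓝 x] G) : divergence F x = divergence G x := by
  refine Finset.sum_congr rfl fun i _ => ?_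
  exact congrArg (· (EuclideanSpace.single i 1))
    ((h.fun_comp (fun v : EuclideanSpace ℝ ι => v i)).fderiv_eq (𝕜 := ℝ))

lemma divergence_zero : divergence (0 : EuclideanSpace ℝ ι → EuclideanSpace ℝ ι) x = 0 := by
  simp [divergence]

lemma divergence_smul {φ : EuclideanSpace ℝ ι → ℝ} (hφ : DifferentiableAt ℝ φ x)
    (hF : DifferentiableAt ℝ F x) :
    divergence (fun y => φ y • F y) x = φ x * divergence F x + fderiv ℝ φ x (F x) := by
  have hFi (i : ι) : DifferentiableAt ℝ (fun y => F y i) x :=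
    (EuclideanSpace.proj (𝕜 := ℝ) i).differentiableAt.comp x hF
  have hsum : fderiv ℝ φ x (F x) = ∑ i, F x i * fderiv ℝ φ x (EuclideanSpace.single i 1) := by
    conv_lhs => rw [← (EuclideanSpace.basisFun ι ℝ).sum_repr (F x)]
    simp [map_sum]
  simp only [divergence, PiLp.smul_apply, smul_eq_mul, fderiv_fun_mul hφ (hFi _), Finset.mul_sum,
    hsum, add_apply, smul_apply, Finset.sum_add_distrib]

theorem integral_divergence_eq_zero (hF : ContDiff ℝ 1 F) (hFc : HasCompactSupport F) :
    ∫ x, divergence F x = 0 := by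
  have hFi (i : ι) : ContDiff ℝ 1 (fun y => F y i) :=
    (EuclideanSpace.proj (𝕜 := ℝ) i).contDiff.comp hF
  have hFic (i : ι) : HasCompactSupport (fun y => F y i) :=
    hFc.comp_left (g := EuclideanSpace.proj (𝕜 := ℝ) i) (map_zero _)
  have hint (i : ι) :
      Integrable fun y => fderiv ℝ (fun y => F y i) y (EuclideanSpace.single i 1) :=
    (((hFi i).continuous_fderiv one_ne_zero).clm_apply
      continuous_const).integrable_of_hasCompactSupport (((hFic i).fderiv ℝ).comp_left
        (g := fun L : EuclideanSpace ℝ ι →L[ℝ] ℝ => L (EuclideanSpace.single i 1)) rfl)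
  simp only [divergence]
  rw [integral_finsetSum _ fun i _ => hint i]
  refine Finset.sum_eq_zero fun i _ => ?_
  -- integration by parts against the constant function `1`
  have := integral_mul_fderiv_eq_neg_fderiv_mul_of_integrable (μ := volume)
    (f := fun _ => (1 : ℝ)) (g := fun y => F y i) (v := EuclideanSpace.single i 1) (by simp)
    (by simpa using hint i)
    (by simpa using (hFi i).continuous.integrable_of_hasCompactSupport (hFic i))
    (fun _ _ => differentiableAt_const _) (fun y _ => (hFi i).differentiable one_ne_zero y)
  simpa using this

variable {Ω : Set (EuclideanSpace ℝ ι)} {J : EuclideanSpace ℝ ι → EuclideanSpace ℝ ι}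
  {v : EuclideanSpace ℝ ι → ℝ}

lemma setIntegral_ramp_mul_fderiv_apply_eq_zero (hΩ : IsOpen Ω) (hΩb : Bornology.IsBounded Ω)
    (hJ : ContDiffOn ℝ 1 J Ω) (hdiv : ∀ x ∈ Ω, divergence J x = 0) (hv : ContDiffOn ℝ 1 v Ω)
    (hvc : ContinuousOn v (closure Ω)) (hv0 : ∀ x ∈ frontier Ω, v x = 0) {ε : ℝ} (hε : 0 < ε) :
    ∫ x in Ω, ramp ε (v x) * fderiv ℝ v x (J x) = 0 := by
  set F := Ω.indicator fun y => rampPrimitive ε (v y) • J y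
  have hout : ∀ x ∉ Ω, F =ᶠ[𝓝 x] 0 := fun x hx => by
    filter_upwards [eventually_abs_lt_of_notMem hvc hv0 hε hx] with y hy
    by_cases hyΩ : y ∈ Ω
    · simp [F, hyΩ, rampPrimitive_eq_zero hε (hy hyΩ).le]
    · simp [F, hyΩ]
  have hin : ∀ x ∈ Ω, F =ᶠ[𝓝 x] fun y => rampPrimitive ε (v y) • J y := fun x hx => by
    filter_upwards [hΩ.mem_nhds hx] with y hy using indicator_of_mem hy _
  have hFC : ContDiff ℝ 1 F := contDiff_iff_contDiffAt.2 fun x => by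
    by_cases hx : x ∈ Ω
    · exact ((contDiff_rampPrimitive.contDiffAt.comp x (hv.contDiffAt (hΩ.mem_nhds hx))).smul
        (hJ.contDiffAt (hΩ.mem_nhds hx))).congr_of_eventuallyEq (hin x hx)
    · exact contDiffAt_const.congr_of_eventuallyEq (hout x hx)
  have hFc : HasCompactSupport F := HasCompactSupport.intro hΩb.isCompact_closure
    fun x hx => indicator_of_notMem (fun h => hx (subset_closure h)) _
  have hdivF (x) :
      divergence F x = Ω.indicator (fun y => ramp ε (v y) * fderiv ℝ v y (J y)) x := by
    by_cases hx : x ∈ Ω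
    · have hvx := (hv.differentiableOn one_ne_zero).differentiableAt (hΩ.mem_nhds hx)
      have hcomp :
          HasFDerivAt (fun y => rampPrimitive ε (v y)) (ramp ε (v x) • fderiv ℝ v x) x :=
        (hasDerivAt_rampPrimitive (v x)).comp_hasFDerivAt x hvx.hasFDerivAt
      rw [(hin x hx).divergence_eq, divergence_smul hcomp.differentiableAt
        ((hJ.differentiableOn one_ne_zero).differentiableAt (hΩ.mem_nhds hx)), hdiv x hx,
        hcomp.fderiv, indicator_of_mem hx]
      simp
    · rw [(hout x hx).divergence_eq, divergence_zero, indicator_of_notMem hx]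
  rw [← integral_indicator hΩ.measurableSet, ← integral_divergence_eq_zero hFC hFc]
  simp only [hdivF]

theorem setIntegral_fderiv_apply_eq_zero (hΩ : IsOpen Ω) (hΩb : Bornology.IsBounded Ω)
    (hJ : ContDiffOn ℝ 1 J Ω) (hdiv : ∀ x ∈ Ω, divergence J x = 0) (hv : ContDiffOn ℝ 1 v Ω)
    (hvc : ContinuousOn v (closure Ω)) (hv0 : ∀ x ∈ frontier Ω, v x = 0)
    (hint : IntegrableOn (fun x => fderiv ℝ v x (J x)) Ω) :
    ∫ x in Ω, fderiv ℝ v x (J x) = 0 := by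
  have hcrit : ∀ᵐ x ∂volume.restrict Ω, v x = 0 → fderiv ℝ v x = 0 := by
    rw [ae_restrict_iff' hΩ.measurableSet]
    filter_upwards [measure_eq_zero_iff_ae_notMem.1
      (addHaar_setOf_eq_zero_fderiv_ne_zero volume v)] with x hx hxΩ hvx
    by_contra h
    exact hx ⟨hv.contDiffAt (hΩ.mem_nhds hxΩ), hvx, h⟩
  have hlim : Tendsto (fun ε => ∫ x in Ω, ramp ε (v x) * fderiv ℝ v x (J x)) (𝓝[>] 0)
      (𝓝 (∫ x in Ω, fderiv ℝ v x (J x))) := by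
    refine tendsto_integral_filter_of_dominated_convergence (fun x => ‖fderiv ℝ v x (J x)‖)
      (Eventually.of_forall fun ε => ((continuous_ramp.comp_continuousOn hv.continuousOn
        ).aestronglyMeasurable hΩ.measurableSet).mul hint.1)
      (Eventually.of_forall fun ε => Eventually.of_forall fun x => ?_) hint.norm ?_
    · rw [norm_mul, Real.norm_of_nonneg (ramp_nonneg _)]
      exact mul_le_of_le_one_left (norm_nonneg _) (ramp_le_one _)
    · filter_upwards [hcrit] with x hx
      by_cases hvx : v x = 0
      · simp [hx hvx]
      · simpa using (tendsto_ramp hvx).mul_const (fderiv ℝ v x (J x))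
  refine tendsto_nhds_unique hlim (tendsto_const_nhds.congr' ?_)
  filter_upwards [self_mem_nhdsWithin] with ε hε
  exact (setIntegral_ramp_mul_fderiv_apply_eq_zero hΩ hΩb hJ hdiv hv hvc hv0 hε).symm

theorem setIntegral_fderiv_apply_eq_of_eqOn_frontier (hΩ : IsOpen Ω)
    (hΩb : Bornology.IsBounded Ω) (hJ : ContDiffOn ℝ 1 J (closure Ω))
    (hdiv : ∀ x ∈ Ω, divergence J x = 0) {u w : EuclideanSpace ℝ ι → ℝ}
    (hu : ContDiffOn ℝ 1 u (closure Ω)) (hw : ContDiffOn ℝ 1 w (closure Ω))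
    (hwu : ∀ x ∈ frontier Ω, w x = u x) :
    ∫ x in Ω, fderiv ℝ u x (J x) = ∫ x in Ω, fderiv ℝ w x (J x) := by
  have hdiff {f : EuclideanSpace ℝ ι → ℝ} (hf : ContDiffOn ℝ 1 f (closure Ω)) {x} (hx : x ∈ Ω) :
      DifferentiableAt ℝ f x :=
    (hf.differentiableOn one_ne_zero).differentiableAt
      (mem_of_superset (hΩ.mem_nhds hx) subset_closure)
  have hzero := setIntegral_fderiv_apply_eq_zero hΩ hΩb (hJ.mono subset_closure) hdiv
    ((hw.sub hu).mono subset_closure) (hw.sub hu).continuousOn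
    (fun x hx => sub_eq_zero.2 (hwu x hx))
    (integrableOn_fderiv_apply hΩ hΩb (hw.sub hu) hJ.continuousOn)
  rw [eq_comm, ← sub_eq_zero, ← integral_sub
    (integrableOn_fderiv_apply hΩ hΩb hw hJ.continuousOn)
    (integrableOn_fderiv_apply hΩ hΩb hu hJ.continuousOn), ← hzero]
  refine setIntegral_congr_fun hΩ.measurableSet fun x hx => ?_
  simp [fderiv_fun_sub (hdiff hw hx) (hdiff hu hx)]

end Divergence

end Calibration

open Calibration

theorem stmt9_general (n : ℕ) (Ω : Set (EuclideanSpace ℝ (Fin n)))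
    (hΩopen : IsOpen Ω) (hΩbdd : Bornology.IsBounded Ω)
    (a : EuclideanSpace ℝ (Fin n) → ℝ)
    (J : EuclideanSpace ℝ (Fin n) → EuclideanSpace ℝ (Fin n))
    (hJ : ContDiffOn ℝ 1 J (closure Ω))
    (hdiv : ∀ x ∈ Ω, ∑ i : Fin n,
      fderiv ℝ (fun y => J y i) x (EuclideanSpace.single i 1) = 0)
    (hJa : ∀ x ∈ closure Ω, ‖J x‖ = a x)
    (u : EuclideanSpace ℝ (Fin n) → ℝ) (hu : ContDiffOn ℝ 1 u (closure Ω))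
    (hcalib : ∀ x ∈ Ω, ⟪J x, gradient u x⟫ = a x * ‖gradient u x‖) :
    ∀ w : EuclideanSpace ℝ (Fin n) → ℝ, ContDiffOn ℝ 1 w (closure Ω) →
      (∀ x ∈ frontier Ω, w x = u x) →
      ∫ x in Ω, a x * ‖gradient u x‖ ≤ ∫ x in Ω, a x * ‖gradient w x‖ := by
  intro w hw hwu
  have hJΩ (x) (hx : x ∈ Ω) : a x = ‖J x‖ := (hJa x (subset_closure hx)).symm
  have hinner (f : EuclideanSpace ℝ (Fin n) → ℝ) (x) :
      ⟪J x, gradient f x⟫ = fderiv ℝ f x (J x) := by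
    simp [inner_gradient_right]
  have hnorm (f : EuclideanSpace ℝ (Fin n) → ℝ) (x) : ‖gradient f x‖ = ‖fderiv ℝ f x‖ :=
    (InnerProductSpace.toDual ℝ _).symm.norm_map _
  calc ∫ x in Ω, a x * ‖gradient u x‖ = ∫ x in Ω, fderiv ℝ u x (J x) :=
        setIntegral_congr_fun hΩopen.measurableSet fun x hx => by rw [← hcalib x hx, hinner]
    _ = ∫ x in Ω, fderiv ℝ w x (J x) :=
        setIntegral_fderiv_apply_eq_of_eqOn_frontier hΩopen hΩbdd hJ hdiv hu hw hwu
    _ ≤ ∫ x in Ω, a x * ‖gradient w x‖ := by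
        refine setIntegral_mono_on (integrableOn_fderiv_apply hΩopen hΩbdd hw hJ.continuousOn)
          ((integrableOn_norm_mul_norm_fderiv hΩopen hΩbdd hw hJ.continuousOn).congr_fun
            (fun x hx => by rw [hJΩ x hx, hnorm]) hΩopen.measurableSet)
          hΩopen.measurableSet fun x hx => ?_
        rw [← hinner, hJΩ x hx]
        exact real_inner_le_norm _ _

/-- calibration argument. If `J` is a divergence-free `C¹` vector field on a
bounded open set `Ω ⊂ ℝⁿ` with `C¹` boundary, `|J| = a`, and `u ∈ C¹(closure Ω)` satisfies
`J·∇u = a|∇u|`, then `u` minimizes `∫_Ω a|∇w|` among `w ∈ C¹(closure Ω)` with `w = u`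
on `∂Ω`. -/
theorem stmt9 (n : ℕ) (Ω : Set (EuclideanSpace ℝ (Fin n)))
    (hΩopen : IsOpen Ω) (hΩbdd : Bornology.IsBounded Ω)
    -- C¹ boundary: each boundary point admits a C¹ local defining function
    (hC1bdry : ∀ x ∈ frontier Ω, ∃ g : EuclideanSpace ℝ (Fin n) → ℝ,
      ContDiffAt ℝ 1 g x ∧ fderiv ℝ g x ≠ 0 ∧ ∀ᶠ y in nhds x, (y ∈ Ω ↔ g y < 0))
    (a : EuclideanSpace ℝ (Fin n) → ℝ) (ha : ContinuousOn a (closure Ω))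
    (J : EuclideanSpace ℝ (Fin n) → EuclideanSpace ℝ (Fin n))
    (hJ : ContDiffOn ℝ 1 J (closure Ω))
    (hdiv : ∀ x ∈ Ω, ∑ i : Fin n,
      fderiv ℝ (fun y => J y i) x (EuclideanSpace.single i 1) = 0)
    (hJa : ∀ x ∈ closure Ω, ‖J x‖ = a x)
    (u : EuclideanSpace ℝ (Fin n) → ℝ) (hu : ContDiffOn ℝ 1 u (closure Ω))
    (hcalib : ∀ x ∈ Ω, ⟪J x, gradient u x⟫ = a x * ‖gradient u x‖) :
    ∀ w : EuclideanSpace ℝ (Fin n) → ℝ, ContDiffOn ℝ 1 w (closure Ω) →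
      (∀ x ∈ frontier Ω, w x = u x) →
      ∫ x in Ω, a x * ‖gradient u x‖ ≤ ∫ x in Ω, a x * ‖gradient w x‖ :=
  stmt9_general n Ω hΩopen hΩbdd a J hJ hdiv hJa u hu hcalib
end

section
/- Let n ≥ 2 and let A = { x ∈ ℝⁿ : 1 < |x| < 2 } be an annulus. For every u ∈ C¹(closure(A)) with u = c₁ on the sphere {|x| = 1} and u = c₂ on {|x| = 2}, one has ∫_A |x|^{1−n} |∇u(x)| dx ≥ ω_{n−1} |c₂ − c₁|, where ω_{n−1} is the (n−1)-dimensional measure of the unit sphere in ℝⁿ. Moreover, equality holds for u(x) = g(|x|) whenever g : [1,2] → ℝ is C¹ and monotone with g(1) = c₁, g(2) = c₂. -/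
/-!
In polar coordinates `x = r • θ` the Haar measure is `r ^ (n - 1) dr dσ(θ)`, and the weight
`‖x‖ ^ (1 - n)` cancels this Jacobian exactly, so the weighted integral of `‖∇u‖` over the annulus
`a < ‖x‖ < b` is `∫_{S^{n-1}} ∫_a^b ‖∇u(r • θ)‖ dr dσ(θ)`. On each ray the inner integral is at
least `|u (b • θ) - u (a • θ)| = |c₂ - c₁|`, and `σ(S^{n-1}) = n · vol(B₁)`. For `u = g ∘ ‖·‖` the
inner integrand is `|g' r|`, and when `g` is monotone `∫_a^b |g'| = |g b - g a|`, so equality holds.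
-/

open MeasureTheory Metric Set Module

def annulus {E : Type*} [Norm E] (a b : ℝ) : Set E := {x | a < ‖x‖ ∧ ‖x‖ < b}

section Annulus

variable {E : Type*} [NormedAddCommGroup E] {a b : ℝ}

theorem isOpen_annulus : IsOpen (annulus a b : Set E) :=
  (isOpen_lt continuous_const continuous_norm).inter (isOpen_lt continuous_norm continuous_const)

theorem closure_annulus_subset : closure (annulus a b : Set E) ⊆ {x | a ≤ ‖x‖ ∧ ‖x‖ ≤ b} :=
  closure_minimal (fun _ hx ↦ ⟨hx.1.le, hx.2.le⟩)
    ((isClosed_le continuous_const continuous_norm).inter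
      (isClosed_le continuous_norm continuous_const))

theorem closure_annulus_mem_nhds {x : E} (hx : x ∈ annulus a b) :
    closure (annulus a b) ∈ nhds x :=
  Filter.mem_of_superset (isOpen_annulus.mem_nhds hx) subset_closure

variable [NormedSpace ℝ E]

theorem norm_smul_of_nonneg_of_norm_eq_one {r : ℝ} (hr : 0 ≤ r) {θ : E} (hθ : ‖θ‖ = 1) :
    ‖r • θ‖ = r := by
  rw [norm_smul_of_nonneg hr, hθ, mul_one]

theorem exists_ball_subset_annulus (ha : 0 < a) {x : E} (hxa : a ≤ ‖x‖) (hxb : ‖x‖ ≤ b) :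
    ∃ c, x ∈ closedBall c ((b - a) / 2) ∧ ball c ((b - a) / 2) ⊆ annulus a b := by
  have hx : 0 < ‖x‖ := ha.trans_le hxa
  set c : E := ((a + b) / 2 / ‖x‖) • x
  have hc : ‖c‖ = (a + b) / 2 := by
    rw [norm_smul_of_nonneg (div_nonneg (by linarith) hx.le), div_mul_cancel₀ _ hx.ne']
  refine ⟨c, ?_, fun z hz ↦ ?_⟩
  · have hxc : x - c = (1 - (a + b) / 2 / ‖x‖) • x := by rw [sub_smul, one_smul]
    rw [mem_closedBall, dist_eq_norm, hxc, norm_smul, Real.norm_eq_abs, ← abs_of_pos hx,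
      ← abs_mul, abs_of_pos hx, sub_mul, one_mul, div_mul_cancel₀ _ hx.ne', abs_sub_le_iff]
    constructor <;> linarith
  · rw [mem_ball, dist_eq_norm] at hz
    have h₁ := norm_sub_norm_le c z
    have h₂ := norm_le_norm_add_norm_sub' z c
    rw [norm_sub_rev] at h₁
    exact ⟨by linarith, by linarith⟩

theorem closure_annulus (ha : 0 < a) (hab : a < b) :
    closure (annulus a b : Set E) = {x | a ≤ ‖x‖ ∧ ‖x‖ ≤ b} := by
  refine closure_annulus_subset.antisymm fun x ⟨hxa, hxb⟩ ↦ ?_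
  obtain ⟨c, hxc, hc⟩ := exists_ball_subset_annulus ha hxa hxb
  rw [← closure_ball c (by linarith)] at hxc
  exact closure_mono hc hxc

theorem uniqueDiffOn_closure_annulus (ha : 0 < a) (hab : a < b) :
    UniqueDiffOn ℝ (closure (annulus a b : Set E)) := fun x hx ↦ by
  obtain ⟨c, hxc, hc⟩ := exists_ball_subset_annulus ha (closure_annulus_subset hx).1
    (closure_annulus_subset hx).2
  rw [← closure_ball c (by linarith)] at hxc
  refine (uniqueDiffWithinAt_convex (convex_ball c _) ?_ hxc).mono (hc.trans subset_closure)
  rw [isOpen_ball.interior_eq]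
  exact nonempty_ball.2 (by linarith)

end Annulus

theorem integrableOn_annulus_rpow_norm_mul {E : Type*} [NormedAddCommGroup E] [ProperSpace E]
    [MeasurableSpace E] [OpensMeasurableSpace E] (μ : Measure E) [IsFiniteMeasureOnCompacts μ]
    {a b : ℝ} (ha : 0 < a) (p : ℝ) {h : E → ℝ} (hh : ContinuousOn h (closure (annulus a b))) :
    IntegrableOn (fun x ↦ ‖x‖ ^ p * h x) (annulus a b) μ := by
  have hweight : ContinuousOn (fun x : E ↦ ‖x‖ ^ p) (closure (annulus a b)) := fun x hx ↦
    (continuous_norm.continuousAt.rpow_const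
      (.inl (ha.trans_le (closure_annulus_subset hx).1).ne')).continuousWithinAt
  have hK : IsCompact (closure (annulus a b : Set E)) :=
    (isBounded_ball (x := 0) (r := b)).subset (fun x hx ↦ mem_ball_zero_iff.2 hx.2)
      |>.isCompact_closure
  exact ((hweight.mul hh).integrableOn_compact hK).mono_set subset_closure

section Calculus

variable {a b : ℝ} {g : ℝ → ℝ}

theorem integral_Ioo_abs_deriv_of_monotoneOn (hab : a ≤ b) (hgc : ContinuousOn g (Icc a b))
    (hgd : DifferentiableOn ℝ g (Ioo a b)) (hg' : IntegrableOn (deriv g) (Ioo a b))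
    (hmono : MonotoneOn g (Icc a b)) :
    ∫ x in Ioo a b, |deriv g x| = g b - g a := by
  have hnonneg (x : ℝ) (hx : x ∈ Ioo a b) : 0 ≤ deriv g x := by
    rw [← derivWithin_of_mem_nhds (Ioo_mem_nhds hx.1 hx.2)]
    exact (hmono.mono Ioo_subset_Icc_self).derivWithin_nonneg
  rw [setIntegral_congr_fun measurableSet_Ioo fun x hx ↦ abs_of_nonneg (hnonneg x hx),
    ← integral_Ioc_eq_integral_Ioo, ← intervalIntegral.integral_of_le hab]
  refine intervalIntegral.integral_eq_sub_of_hasDerivAt_of_le hab hgc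
    (fun x hx ↦ (hgd.differentiableAt (Ioo_mem_nhds hx.1 hx.2)).hasDerivAt) ?_
  rwa [intervalIntegrable_iff_integrableOn_Ioo_of_le hab]

theorem integral_Ioo_abs_deriv_of_antitoneOn (hab : a ≤ b) (hgc : ContinuousOn g (Icc a b))
    (hgd : DifferentiableOn ℝ g (Ioo a b)) (hg' : IntegrableOn (deriv g) (Ioo a b))
    (hanti : AntitoneOn g (Icc a b)) :
    ∫ x in Ioo a b, |deriv g x| = g a - g b := by
  have h := integral_Ioo_abs_deriv_of_monotoneOn (g := -g) hab hgc.neg hgd.neg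
    (by rw [deriv.neg']; exact hg'.neg) fun x hx y hy hxy ↦ neg_le_neg (hanti hx hy hxy)
  simp only [deriv.neg', abs_neg, Pi.neg_apply] at h
  linarith

theorem integral_Ioo_abs_deriv_eq_abs_sub (hab : a ≤ b) (hgc : ContinuousOn g (Icc a b))
    (hgd : DifferentiableOn ℝ g (Ioo a b)) (hg' : IntegrableOn (deriv g) (Ioo a b))
    (hg : MonotoneOn g (Icc a b) ∨ AntitoneOn g (Icc a b)) :
    ∫ x in Ioo a b, |deriv g x| = |g b - g a| := by
  have ha : a ∈ Icc a b := left_mem_Icc.2 hab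
  have hb : b ∈ Icc a b := right_mem_Icc.2 hab
  rcases hg with hmono | hanti
  · rw [integral_Ioo_abs_deriv_of_monotoneOn hab hgc hgd hg' hmono,
      abs_of_nonneg (sub_nonneg.2 (hmono ha hb hab))]
  · rw [integral_Ioo_abs_deriv_of_antitoneOn hab hgc hgd hg' hanti,
      abs_of_nonpos (sub_nonpos.2 (hanti ha hb hab)), neg_sub]

theorem norm_gradient {E : Type*} [NormedAddCommGroup E] [InnerProductSpace ℝ E] [CompleteSpace E]
    (f : E → ℝ) (x : E) : ‖gradient f x‖ = ‖fderiv ℝ f x‖ := by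
  simp [gradient]

theorem norm_fderiv_comp_norm {E : Type*} [NormedAddCommGroup E] [NormedSpace ℝ E] [Nontrivial E]
    {x : E} (hg : DifferentiableAt ℝ g ‖x‖) (hx : DifferentiableAt ℝ (‖·‖) x) :
    ‖fderiv ℝ (fun y ↦ g ‖y‖) x‖ = |deriv g ‖x‖| := by
  change ‖fderiv ℝ (g ∘ (‖·‖)) x‖ = _
  rw [(hg.hasDerivAt.comp_hasFDerivAt x hx.hasFDerivAt).fderiv, norm_smul, norm_fderiv_norm hx,
    mul_one, Real.norm_eq_abs]

theorem norm_sub_le_integral_norm_fderivWithin_ray {E F : Type*} [NormedAddCommGroup E]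
    [NormedSpace ℝ E] [NormedAddCommGroup F] [NormedSpace ℝ F] (ha : 0 < a) (hab : a < b)
    {u : E → F} (hu : ContDiffOn ℝ 1 u (closure (annulus a b))) {θ : E} (hθ : ‖θ‖ = 1) :
    ‖u (b • θ) - u (a • θ)‖ ≤
      ∫ r in Ioo a b, ‖fderivWithin ℝ u (closure (annulus a b)) (r • θ)‖ := by
  have hIcc : MapsTo (· • θ) (Icc a b) (closure (annulus a b)) := fun r hr ↦ by
    rw [closure_annulus ha hab, mem_ofPred_eq,
      norm_smul_of_nonneg_of_norm_eq_one (ha.le.trans hr.1) hθ]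
    exact hr
  have hIoo : MapsTo (· • θ) (Ioo a b) (annulus a b) := fun r hr ↦ by
    rw [annulus, mem_ofPred_eq, norm_smul_of_nonneg_of_norm_eq_one (ha.le.trans hr.1.le) hθ]
    exact hr
  have hderiv (r : ℝ) (hr : r ∈ Ioo a b) :
      HasDerivAt (fun r ↦ u (r • θ)) (fderiv ℝ u (r • θ) θ) r := by
    have hdiff : DifferentiableAt ℝ u (r • θ) :=
      (hu.differentiableOn one_ne_zero).differentiableAt (closure_annulus_mem_nhds (hIoo hr))
    simpa only [one_smul, Function.comp_def] using
      hdiff.hasFDerivAt.comp_hasDerivAt r ((hasDerivAt_id' r).smul_const θ)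
  have hcont : ContinuousOn (fun r : ℝ ↦ r • θ) (Icc a b) := by fun_prop
  rw [← integral_Ioc_eq_integral_Ioo, ← intervalIntegral.integral_of_le hab.le]
  refine norm_sub_le_integral_of_norm_deriv_le_of_le (f := fun r ↦ u (r • θ)) hab.le
    (hu.continuousOn.comp hcont hIcc)
    (fun r hr ↦ (hderiv r hr).differentiableAt.differentiableWithinAt)
    (.of_forall fun r hr ↦ ?_) ?_
  · rw [(hderiv r hr).deriv, fderivWithin_of_mem_nhds (closure_annulus_mem_nhds (hIoo hr))]
    simpa [hθ] using (fderiv ℝ u (r • θ)).le_opNorm θ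
  · refine ContinuousOn.intervalIntegrable ?_
    rw [uIcc_of_le hab.le]
    exact ((hu.continuousOn_fderivWithin (uniqueDiffOn_closure_annulus ha hab) le_rfl).comp
      hcont hIcc).norm

end Calculus

section RadialIntegral

variable {E F : Type*} [NormedAddCommGroup E] [NormedSpace ℝ E] [NormedAddCommGroup F]

theorem homeomorphUnitSphereProd_snd_smul_fst (x : ({0}ᶜ : Set E)) :
    ((homeomorphUnitSphereProd E x).2 : ℝ) • ((homeomorphUnitSphereProd E x).1 : E) = x := by
  simp [smul_inv_smul₀ (norm_ne_zero_iff.2 x.2)]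

variable [NormedSpace ℝ F]

theorem integral_volumeIoiPow (k : ℕ) (f : ℝ → F) :
    ∫ r : Ioi (0 : ℝ), f r ∂.volumeIoiPow k = ∫ r in Ioi (0 : ℝ), r ^ k • f r := by
  simp only [Measure.volumeIoiPow, ENNReal.ofReal]
  rw [integral_withDensity_eq_integral_smul (measurable_subtype_coe.pow_const _).real_toNNReal,
    integral_subtype_comap measurableSet_Ioi fun r ↦ Real.toNNReal (r ^ k) • f r]
  refine setIntegral_congr_fun measurableSet_Ioi fun r hr ↦ ?_
  rw [NNReal.smul_def, Real.coe_toNNReal _ (pow_nonneg (le_of_lt hr) _)]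

theorem integral_volumeIoiPow_indicator_annulus [FiniteDimensional ℝ E] [Nontrivial E] {a b : ℝ}
    (ha : 0 ≤ a) (h : E → ℝ) (θ : sphere (0 : E) 1) :
    ∫ r : Ioi (0 : ℝ), (annulus a b).indicator (fun x ↦ ‖x‖ ^ (1 - finrank ℝ E : ℝ) * h x)
      (r.1 • θ.1) ∂.volumeIoiPow (finrank ℝ E - 1) = ∫ r in Ioo a b, h (r • θ.1) := by
  have hIoo : Ioo a b ⊆ Ioi 0 := fun r hr ↦ ha.trans_lt hr.1
  rw [integral_volumeIoiPow _ fun r ↦ (annulus a b).indicator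
      (fun x ↦ ‖x‖ ^ (1 - finrank ℝ E : ℝ) * h x) (r • θ.1),
    ← inter_eq_self_of_subset_right hIoo, ← setIntegral_indicator measurableSet_Ioo]
  refine setIntegral_congr_fun measurableSet_Ioi fun r (hr : 0 < r) ↦ ?_
  have hnorm : ‖r • θ.1‖ = r := norm_smul_of_nonneg_of_norm_eq_one hr.le (norm_eq_of_mem_sphere θ)
  by_cases hmem : r ∈ Ioo a b
  · have hpow : r ^ (finrank ℝ E - 1) * r ^ (1 - finrank ℝ E : ℝ) = 1 := by
      rw [← Real.rpow_natCast, ← Real.rpow_add hr, Nat.cast_pred finrank_pos,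
        show (finrank ℝ E - 1 + (1 - finrank ℝ E) : ℝ) = 0 by ring, Real.rpow_zero]
    rw [indicator_of_mem (show r • θ.1 ∈ annulus a b by simpa [annulus, hnorm] using hmem),
      indicator_of_mem hmem, hnorm, smul_eq_mul, ← mul_assoc, hpow, one_mul]
  · rw [indicator_of_notMem (show r • θ.1 ∉ annulus a b by simpa [annulus, hnorm] using hmem),
      indicator_of_notMem hmem, smul_zero]

end RadialIntegral

section Polar

variable {E F : Type*} [NormedAddCommGroup E] [NormedSpace ℝ E] [MeasurableSpace E] [BorelSpace E]
  [FiniteDimensional ℝ E] [Nontrivial E] (μ : Measure E) [μ.IsAddHaarMeasure]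
  [NormedAddCommGroup F]

theorem integrable_comp_smul_toSphere_prod {G : E → F} (hG : Integrable G μ) :
    Integrable (fun p : sphere (0 : E) 1 × Ioi (0 : ℝ) ↦ G (p.2.1 • p.1.1))
      (μ.toSphere.prod (.volumeIoiPow (finrank ℝ E - 1))) := by
  rw [← μ.measurePreserving_homeomorphUnitSphereProd.integrable_comp_emb
    (Homeomorph.measurableEmbedding _)]
  simp only [Function.comp_def, homeomorphUnitSphereProd_snd_smul_fst]
  refine (integrableOn_iff_comap_subtypeVal (measurableSet_singleton 0).compl).1 ?_
  rw [IntegrableOn, restrict_compl_singleton]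
  exact hG

theorem integral_eq_integral_toSphere_volumeIoiPow [NormedSpace ℝ F] {G : E → F}
    (hG : Integrable G μ) :
    ∫ x, G x ∂μ = ∫ θ : sphere (0 : E) 1,
      ∫ r : Ioi (0 : ℝ), G (r.1 • θ.1) ∂.volumeIoiPow (finrank ℝ E - 1) ∂μ.toSphere :=
  calc ∫ x, G x ∂μ = ∫ x : ({0}ᶜ : Set E), G x ∂μ.comap (↑) := by
        rw [integral_subtype_comap (measurableSet_singleton _).compl, restrict_compl_singleton]
    _ = ∫ p : sphere (0 : E) 1 × Ioi (0 : ℝ), G (p.2.1 • p.1.1)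
          ∂μ.toSphere.prod (.volumeIoiPow (finrank ℝ E - 1)) := by
        simpa only [homeomorphUnitSphereProd_snd_smul_fst] using
          μ.measurePreserving_homeomorphUnitSphereProd.integral_comp
            (Homeomorph.measurableEmbedding _) (fun p ↦ G (p.2.1 • p.1.1))
    _ = _ := integral_prod _ (integrable_comp_smul_toSphere_prod μ hG)

variable {a b : ℝ}

theorem setIntegral_annulus_eq_integral_toSphere (ha : 0 ≤ a) {h : E → ℝ}
    (hint : IntegrableOn (fun x ↦ ‖x‖ ^ (1 - finrank ℝ E : ℝ) * h x) (annulus a b) μ) :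
    ∫ x in annulus a b, ‖x‖ ^ (1 - finrank ℝ E : ℝ) * h x ∂μ =
      ∫ θ : sphere (0 : E) 1, (∫ r in Ioo a b, h (r • θ.1)) ∂μ.toSphere := by
  rw [← integral_indicator isOpen_annulus.measurableSet,
    integral_eq_integral_toSphere_volumeIoiPow μ
      (hint.integrable_indicator isOpen_annulus.measurableSet)]
  simp only [integral_volumeIoiPow_indicator_annulus ha h]

theorem integrable_integral_Ioo_toSphere (ha : 0 ≤ a) {h : E → ℝ}
    (hint : IntegrableOn (fun x ↦ ‖x‖ ^ (1 - finrank ℝ E : ℝ) * h x) (annulus a b) μ) :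
    Integrable (fun θ : sphere (0 : E) 1 ↦ ∫ r in Ioo a b, h (r • θ.1)) μ.toSphere := by
  simpa only [integral_volumeIoiPow_indicator_annulus ha h] using
    (integrable_comp_smul_toSphere_prod μ
      (hint.integrable_indicator isOpen_annulus.measurableSet)).integral_prod_left

end Polar

section WeightedVariation

variable {E : Type*} [NormedAddCommGroup E] [MeasurableSpace E] [BorelSpace E] [Nontrivial E]
  {a b : ℝ}

theorem mul_abs_sub_le_setIntegral_annulus [NormedSpace ℝ E] [FiniteDimensional ℝ E]
    (μ : Measure E) [μ.IsAddHaarMeasure] (ha : 0 < a) (hab : a < b) {u : E → ℝ} {c₁ c₂ : ℝ}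
    (hu : ContDiffOn ℝ 1 u (closure (annulus a b)))
    (hua : ∀ x, ‖x‖ = a → u x = c₁) (hub : ∀ x, ‖x‖ = b → u x = c₂) :
    finrank ℝ E * μ.real (ball 0 1) * |c₂ - c₁| ≤
      ∫ x in annulus a b, ‖x‖ ^ (1 - finrank ℝ E : ℝ) * ‖fderiv ℝ u x‖ ∂μ := by
  -- Unlike `fderiv`, the derivative within the closed annulus is continuous up to the boundary.
  set h : E → ℝ := fun x ↦ ‖fderivWithin ℝ u (closure (annulus a b)) x‖
  have hint := integrableOn_annulus_rpow_norm_mul μ ha (1 - finrank ℝ E) (h := h)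
    (hu.continuousOn_fderivWithin (uniqueDiffOn_closure_annulus ha hab) le_rfl).norm
  have hray (θ : sphere (0 : E) 1) : |c₂ - c₁| ≤ ∫ r in Ioo a b, h (r • θ.1) := by
    have hθ : ‖θ.1‖ = 1 := norm_eq_of_mem_sphere θ
    simpa only [hua _ (norm_smul_of_nonneg_of_norm_eq_one ha.le hθ),
      hub _ (norm_smul_of_nonneg_of_norm_eq_one (ha.trans hab).le hθ), Real.norm_eq_abs]
      using norm_sub_le_integral_norm_fderivWithin_ray ha hab hu hθ
  calc finrank ℝ E * μ.real (ball 0 1) * |c₂ - c₁|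
      = ∫ _ : sphere (0 : E) 1, |c₂ - c₁| ∂μ.toSphere := by
        rw [integral_const, smul_eq_mul, μ.toSphere_real_apply_univ]
    _ ≤ ∫ θ : sphere (0 : E) 1, (∫ r in Ioo a b, h (r • θ.1)) ∂μ.toSphere :=
        integral_mono (integrable_const _) (integrable_integral_Ioo_toSphere μ ha.le hint) hray
    _ = ∫ x in annulus a b, ‖x‖ ^ (1 - finrank ℝ E : ℝ) * h x ∂μ :=
        (setIntegral_annulus_eq_integral_toSphere μ ha.le hint).symm
    _ = _ := setIntegral_congr_fun isOpen_annulus.measurableSet fun x hx ↦ by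
        simp only [h, fderivWithin_of_mem_nhds (closure_annulus_mem_nhds hx)]

theorem setIntegral_annulus_norm_fderiv_comp_norm [InnerProductSpace ℝ E] [FiniteDimensional ℝ E]
    (μ : Measure E) [μ.IsAddHaarMeasure] (ha : 0 < a) (hab : a ≤ b) {g : ℝ → ℝ}
    (hg : ContDiff ℝ 1 g) (hmono : MonotoneOn g (Icc a b) ∨ AntitoneOn g (Icc a b)) :
    ∫ x in annulus a b, ‖x‖ ^ (1 - finrank ℝ E : ℝ) * ‖fderiv ℝ (fun y ↦ g ‖y‖) x‖ ∂μ =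
      finrank ℝ E * μ.real (ball 0 1) * |g b - g a| := by
  have hg' : Continuous (deriv g) := hg.continuous_deriv le_rfl
  have hint := integrableOn_annulus_rpow_norm_mul μ ha (1 - finrank ℝ E) (a := a) (b := b)
    (h := fun x ↦ |deriv g ‖x‖|) (by fun_prop)
  have hradial (x : E) (hx : x ∈ annulus a b) :
      ‖x‖ ^ (1 - finrank ℝ E : ℝ) * ‖fderiv ℝ (fun y ↦ g ‖y‖) x‖ =
        ‖x‖ ^ (1 - finrank ℝ E : ℝ) * |deriv g ‖x‖| := by
    have hx0 : x ≠ 0 := norm_pos_iff.1 (ha.trans hx.1)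
    rw [norm_fderiv_comp_norm (hg.differentiable one_ne_zero _)
      ((contDiffAt_norm ℝ hx0).differentiableAt one_ne_zero)]
  have hinner (θ : sphere (0 : E) 1) :
      ∫ r in Ioo a b, |deriv g ‖r • θ.1‖| = |g b - g a| := by
    rw [← integral_Ioo_abs_deriv_eq_abs_sub hab hg.continuous.continuousOn
      (hg.differentiable one_ne_zero).differentiableOn
      (hg'.integrableOn_Icc.mono_set Ioo_subset_Icc_self) hmono]
    refine setIntegral_congr_fun measurableSet_Ioo fun r hr ↦ ?_
    rw [norm_smul_of_nonneg_of_norm_eq_one (ha.trans hr.1).le (norm_eq_of_mem_sphere θ)]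
  rw [setIntegral_congr_fun isOpen_annulus.measurableSet hradial,
    setIntegral_annulus_eq_integral_toSphere μ ha.le hint]
  simp only [hinner, integral_const, smul_eq_mul, μ.toSphere_real_apply_univ]

end WeightedVariation

/-- on the annulus `A = {1 < |x| < 2} ⊂ ℝⁿ` with weight `|x|^{1−n}`, every
`C¹` function with constant boundary values `c₁, c₂` satisfies
`∫_A |x|^{1−n}|∇u| ≥ ω_{n−1}|c₂ − c₁|` (where `ω_{n−1} = n·vol(B₁)` is the measure of the
unit sphere), with equality for monotone radial functions. -/
theorem stmt10 (n : ℕ) (hn : 2 ≤ n)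
    (A : Set (EuclideanSpace ℝ (Fin n)))
    (hA : A = {x : EuclideanSpace ℝ (Fin n) | 1 < ‖x‖ ∧ ‖x‖ < 2})
    (ω : ℝ)
    (hω : ω = n * (volume (Metric.ball (0 : EuclideanSpace ℝ (Fin n)) 1)).toReal)
    (c₁ c₂ : ℝ) :
    (∀ u : EuclideanSpace ℝ (Fin n) → ℝ, ContDiffOn ℝ 1 u (closure A) →
      (∀ x, ‖x‖ = 1 → u x = c₁) → (∀ x, ‖x‖ = 2 → u x = c₂) →
      ω * |c₂ - c₁| ≤ ∫ x in A, ‖x‖ ^ ((1:ℝ) - n) * ‖gradient u x‖) ∧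
    (∀ g : ℝ → ℝ, ContDiff ℝ 1 g → (MonotoneOn g (Set.Icc 1 2) ∨ AntitoneOn g (Set.Icc 1 2)) →
      g 1 = c₁ → g 2 = c₂ →
      ∫ x in A, ‖x‖ ^ ((1:ℝ) - n) * ‖gradient (fun y : EuclideanSpace ℝ (Fin n) => g ‖y‖) x‖
        = ω * |c₂ - c₁|) := by
  have : Nontrivial (EuclideanSpace ℝ (Fin n)) :=
    Module.nontrivial_of_finrank_pos (R := ℝ) (by rw [finrank_euclideanSpace_fin]; omega)
  have hdim : (finrank ℝ (EuclideanSpace ℝ (Fin n)) : ℝ) = n := by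
    rw [finrank_euclideanSpace_fin]
  have hA' : A = annulus 1 2 := hA
  subst hA' hω
  simp only [norm_gradient]
  refine ⟨fun u hu hu₁ hu₂ ↦ ?_, fun g hg hmono hg₁ hg₂ ↦ ?_⟩
  · simpa only [hdim, measureReal_def] using
      mul_abs_sub_le_setIntegral_annulus volume one_pos one_lt_two hu hu₁ hu₂
  · have key := setIntegral_annulus_norm_fderiv_comp_norm
      (volume : Measure (EuclideanSpace ℝ (Fin n))) one_pos one_le_two hg hmono
    rw [hdim, measureReal_def, hg₁, hg₂] at key
    exact key
end

section
/- Let θ ∈ (0,1), n ≥ 2, and define on D = { (x,z) ∈ ℝ^{n−1} × ℝ : 1/2 < |x| < 1 } the vector field J(x,z) = ( −x|x|^{1−n} · sign(z)|z|^θ , |x|^{2−n} ). Then J is continuous on D, C¹ away from {z = 0}, and div J = 0 in the sense of distributions on D. -/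
open MeasureTheory Set

noncomputable section

lemma csign_cont (θ : ℝ) (hθ0 : 0 < θ) : Continuous (fun z : ℝ => Real.sign z * |z| ^ θ) := by
  have habs : Continuous (fun z : ℝ => |z| ^ θ) :=
    (continuous_abs.rpow_const (fun _ => Or.inr hθ0.le))
  rw [continuous_iff_continuousAt]
  intro z
  rcases lt_trichotomy z 0 with hz | rfl | hz
  · have : (fun z : ℝ => Real.sign z * |z| ^ θ) =ᶠ[nhds z] fun z => (-1) * |z| ^ θ := by
      filter_upwards [eventually_lt_nhds hz] with y hy
      rw [Real.sign_of_neg hy]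
    exact (((continuous_const.mul habs).continuousAt).congr this.symm)
  · have h0 : Real.sign (0:ℝ) * |(0:ℝ)| ^ θ = 0 := by simp
    rw [ContinuousAt, h0]
    refine squeeze_zero_norm (a := fun z : ℝ => |z| ^ θ) (fun t => ?_) ?_
    · rw [Real.norm_eq_abs, abs_mul, abs_of_nonneg (Real.rpow_nonneg (abs_nonneg t) θ)]
      calc |Real.sign t| * |t| ^ θ ≤ 1 * |t| ^ θ := by
            apply mul_le_mul_of_nonneg_right _ (Real.rpow_nonneg (abs_nonneg t) θ)
            rcases Real.sign_apply_eq t with h | h | h <;> simp [h]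
        _ = |t| ^ θ := one_mul _
    · have := habs.continuousAt (x := (0:ℝ))
      rwa [ContinuousAt, abs_zero, Real.zero_rpow hθ0.ne'] at this
  · have : (fun z : ℝ => Real.sign z * |z| ^ θ) =ᶠ[nhds z] fun z => 1 * |z| ^ θ := by
      filter_upwards [eventually_gt_nhds hz] with y hy
      rw [Real.sign_of_pos hy]
    exact (((continuous_const.mul habs).continuousAt).congr this.symm)

section Key
variable {m : ℕ}
local notation "E" => EuclideanSpace ℝ (Fin m)

lemma key3 (θ : ℝ) (hθ0 : 0 < θ) (hm : 1 ≤ m)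
    (φ : EuclideanSpace ℝ (Fin m) × ℝ → ℝ) (hφ : ContDiff ℝ (⊤ : ℕ∞) φ) (hφc : HasCompactSupport φ)
    (hφs : tsupport φ ⊆ {p : EuclideanSpace ℝ (Fin m) × ℝ | 1/2 < ‖p.1‖ ∧ ‖p.1‖ < 1}) :
    ∫ p : EuclideanSpace ℝ (Fin m) × ℝ,
      fderiv ℝ φ p ((-(Real.sign p.2 * |p.2| ^ θ) * ‖p.1‖ ^ (-(m:ℝ))) • p.1,
        ‖p.1‖ ^ ((1:ℝ) - (m:ℝ))) = 0 := by
  haveI : Measure.IsAddHaarMeasure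
      (volume : Measure (EuclideanSpace ℝ (Fin m) × ℝ)) :=
    Measure.prod.instIsAddHaarMeasure _ _
  set c : ℝ → ℝ := fun z => Real.sign z * |z| ^ θ with hc_def
  have hc : Continuous c := csign_cont θ hθ0
  -- the annulus
  set A : Set E := {x : E | 1/2 < ‖x‖ ∧ ‖x‖ < 1} with hA_def
  have hAopen : IsOpen A := by
    have : A = (fun x : E => ‖x‖) ⁻¹' Set.Ioo (1/2) 1 := rfl
    rw [this]
    exact (isOpen_Ioo).preimage continuous_norm
  have hAb : A ⊆ Metric.ball 0 1 := fun x hx => by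
    simpa [Metric.mem_ball, dist_zero_right] using hx.2
  set K : Set E := Prod.fst '' tsupport φ with hK_def
  have hKc : IsCompact K := hφc.image continuous_fst
  have hKA : K ⊆ A := by
    rintro x ⟨p, hp, rfl⟩
    exact hφs hp
  -- cutoff
  obtain ⟨χ, hχsm, hχc, hχA, U, hUopen, hKU, hUA, hχ1⟩ :
      ∃ χ : E → ℝ, ContDiff ℝ 1 χ ∧ HasCompactSupport χ ∧ tsupport χ ⊆ A ∧
        ∃ U : Set E, IsOpen U ∧ K ⊆ U ∧ U ⊆ A ∧ EqOn χ 1 U := by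
    obtain ⟨χ, hχ0, hχ1, -⟩ := exists_contMDiffMap_zero_one_nhds_of_isClosed
      (I := modelWithCornersSelf ℝ E) (n := (⊤ : ℕ∞)) (hAopen.isClosed_compl) (hKc.isClosed) (by
        rw [disjoint_compl_left_iff_subset]; exact hKA)
    obtain ⟨O, hOopen, hAO, hO0⟩ := eventually_nhdsSet_iff_exists.mp hχ0
    obtain ⟨U₀, hU₀open, hKU₀, hU₀1⟩ := eventually_nhdsSet_iff_exists.mp hχ1
    have hsupp : tsupport (χ : E → ℝ) ⊆ Oᶜ := by
      apply closure_minimal _ (hOopen.isClosed_compl)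
      intro x hx
      simp only [Function.mem_support] at hx
      intro hxO
      exact hx (hO0 x hxO)
    have hsuppA : tsupport (χ : E → ℝ) ⊆ A := hsupp.trans (by
      intro x hx
      by_contra hxA
      exact hx (hAO hxA))
    refine ⟨χ, (contMDiff_iff_contDiff.mp χ.contMDiff).of_le (by simp), ?_, hsuppA,
      U₀ ∩ A, hU₀open.inter hAopen, subset_inter hKU₀ hKA, inter_subset_right,
      fun x hx => hU₀1 x hx.1⟩
    rw [hasCompactSupport_def]
    apply Metric.isCompact_of_isClosed_isBounded isClosed_closure
    exact (Metric.isBounded_ball.subset (hsuppA.trans hAb))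
  -- geometry
  set q : E → ℝ := fun x => inner (𝕜 := ℝ) x x with hq_def
  have hqnorm : ∀ x : E, q x = ‖x‖ ^ 2 := fun x => real_inner_self_eq_norm_sq x
  set β : ℝ := -(m:ℝ)/2 with hβ_def
  set γ : ℝ := (1-(m:ℝ))/2 with hγ_def
  have hqA : ∀ x ∈ A, 0 < q x := by
    intro x hx
    rw [hqnorm]
    have h12 : (0:ℝ) < ‖x‖ := lt_trans (by norm_num) hx.1
    positivity
  -- the vector field
  set v : E → E := fun x => (-(q x ^ β)) • x with hv_def
  set W : E → E := fun x => χ x • v x with hW_def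
  have hWv : ∀ x ∈ U, W x = v x := by
    intro x hx
    simp [hW_def, hχ1 hx]
  have hqsm : ContDiff ℝ 1 q := ContDiff.inner ℝ contDiff_id contDiff_id
  have hvsm : ∀ x ∈ A, ContDiffAt ℝ 1 v x := by
    intro x hx
    exact ((hqsm.contDiffAt.rpow_const_of_ne (hqA x hx).ne').neg).smul contDiffAt_id
  have hWsm : ContDiff ℝ 1 W := by
    rw [contDiff_iff_contDiffAt]
    intro x
    by_cases hx : x ∈ A
    · exact (hχsm.contDiffAt).smul (hvsm x hx)
    · have hx' : x ∈ (tsupport χ)ᶜ := fun h => hx (hχA h)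
      have hev : W =ᶠ[nhds x] (fun _ => (0:E)) := by
        filter_upwards [(isOpen_compl_iff.mpr (isClosed_tsupport χ)).mem_nhds hx'] with y hy
        have : χ y = 0 := image_eq_zero_of_notMem_tsupport hy
        simp [hW_def, this]
      exact (contDiffAt_const (c := (0:E))).congr_of_eventuallyEq hev
  set G0 : E → ℝ := fun x => χ x * q x ^ γ with hG0_def
  have hG0sm : ContDiff ℝ 1 G0 := by
    rw [contDiff_iff_contDiffAt]
    intro x
    by_cases hx : x ∈ A
    · exact (hχsm.contDiffAt).mul (hqsm.contDiffAt.rpow_const_of_ne (hqA x hx).ne')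
    · have hx' : x ∈ (tsupport χ)ᶜ := fun h => hx (hχA h)
      have hev : G0 =ᶠ[nhds x] (fun _ => (0:ℝ)) := by
        filter_upwards [(isOpen_compl_iff.mpr (isClosed_tsupport χ)).mem_nhds hx'] with y hy
        have : χ y = 0 := image_eq_zero_of_notMem_tsupport hy
        simp [hG0_def, this]
      exact (contDiffAt_const (c := (0:ℝ))).congr_of_eventuallyEq hev
  -- bridges
  have hbridge1 : ∀ x ∈ A, q x ^ β = ‖x‖ ^ (-(m:ℝ)) := by
    intro x hx
    have h0 : (0:ℝ) ≤ ‖x‖ := norm_nonneg x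
    rw [hqnorm, ← Real.rpow_natCast ‖x‖ 2, ← Real.rpow_mul h0]
    congr 1
    rw [hβ_def]; ring
  have hbridge2 : ∀ x ∈ A, q x ^ γ = ‖x‖ ^ ((1:ℝ)-(m:ℝ)) := by
    intro x hx
    have h0 : (0:ℝ) ≤ ‖x‖ := norm_nonneg x
    rw [hqnorm, ← Real.rpow_natCast ‖x‖ 2, ← Real.rpow_mul h0]
    congr 1
    rw [hγ_def]; ring
  -- divergence of v vanishes on U
  have hdiv : ∀ x ∈ U, ∑ i, fderiv ℝ (fun y : E => W y i) x (EuclideanSpace.single i (1:ℝ)) = 0 := by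
    intro x hxU
    have hxA : x ∈ A := hUA hxU
    have hq0 : q x ≠ 0 := (hqA x hxA).ne'
    have heq : ∀ i : Fin m, fderiv ℝ (fun y : E => W y i) x
        = fderiv ℝ (fun y : E => v y i) x := by
      intro i
      apply Filter.EventuallyEq.fderiv_eq
      filter_upwards [hUopen.mem_nhds hxU] with y hy
      rw [hWv y hy]
    have hvd : ∀ i : Fin m, fderiv ℝ (fun y : E => v y i) x (EuclideanSpace.single i (1:ℝ))
        = (-(q x ^ β)) - (2 * β * q x ^ (β - 1)) * (x i * x i) := by
      intro i
      have hqd : HasFDerivAt q ((fderivInnerCLM ℝ (x, x)).comp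
          ((ContinuousLinearMap.id ℝ E).prod (ContinuousLinearMap.id ℝ E))) x :=
        HasFDerivAt.inner ℝ (hasFDerivAt_id x) (hasFDerivAt_id x)
      have hfd : HasFDerivAt (fun y : E => -(q y ^ β))
          (-((β * q x ^ (β - 1)) • ((fderivInnerCLM ℝ (x, x)).comp
            ((ContinuousLinearMap.id ℝ E).prod (ContinuousLinearMap.id ℝ E))))) x :=
        (hqd.rpow_const (Or.inl hq0)).neg
      have hgd : HasFDerivAt (fun y : E => y i) (EuclideanSpace.proj (𝕜 := ℝ) i) x :=
        (EuclideanSpace.proj (𝕜 := ℝ) i).hasFDerivAt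
      have hmul := hfd.mul hgd
      have hfe : (fun y : E => v y i) = fun y : E => (-(q y ^ β)) * y i := by
        funext y
        rfl
      rw [hfe, show (fun y : E => (-(q y ^ β)) * y i) = (fun y : E => -(q y ^ β)) * (fun y : E => y i) from rfl, hmul.fderiv]
      simp only [ContinuousLinearMap.add_apply, ContinuousLinearMap.smul_apply,
        ContinuousLinearMap.neg_apply, ContinuousLinearMap.coe_comp', Function.comp_apply,
        ContinuousLinearMap.prod_apply, ContinuousLinearMap.coe_id', id_eq,
        fderivInnerCLM_apply, smul_eq_mul]
      have hproj : (EuclideanSpace.proj (𝕜 := ℝ) i) (EuclideanSpace.single i (1:ℝ)) = 1 := by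
        simp
      have hinner1 : (inner (𝕜 := ℝ) x (EuclideanSpace.single i (1:ℝ)) : ℝ) = x i := by
        simp [EuclideanSpace.inner_single_right]
      have hinner2 : (inner (𝕜 := ℝ) (EuclideanSpace.single i (1:ℝ)) x : ℝ) = x i := by
        simp [EuclideanSpace.inner_single_left]
      rw [hproj, hinner1, hinner2]
      ring
    calc ∑ i, fderiv ℝ (fun y : E => W y i) x (EuclideanSpace.single i (1:ℝ))
        = ∑ i : Fin m, ((-(q x ^ β)) - (2 * β * q x ^ (β - 1)) * (x i * x i)) := by
          refine Finset.sum_congr rfl fun i _ => ?_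
          rw [heq i, hvd i]
      _ = (m:ℝ) * (-(q x ^ β)) - (2 * β * q x ^ (β - 1)) * (∑ i, x i * x i) := by
          rw [Finset.sum_sub_distrib, Finset.sum_const, ← Finset.mul_sum,
            Finset.card_univ, Fintype.card_fin, nsmul_eq_mul]
      _ = (m:ℝ) * (-(q x ^ β)) - (2 * β * q x ^ (β - 1)) * q x := by
          have hqx : q x = ∑ i, x i * x i := by
            rw [hqnorm, EuclideanSpace.norm_sq_eq]; simp only [Real.norm_eq_abs, sq_abs, sq, abs_mul_abs_self]
          rw [hqx]
      _ = 0 := by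
          rw [Real.rpow_sub_one hq0]
          field_simp [hβ_def]
          ring
  -- basis expansion
  have hbasis : ∀ u : E, ∑ i, u i • (EuclideanSpace.single i (1:ℝ) : E) = u := by
    intro u
    simpa using (EuclideanSpace.basisFun (Fin m) ℝ).sum_repr u
  have hsum : ∀ r : Fin m → ℝ, ∑ i, r i • ((EuclideanSpace.single i (1:ℝ) : E), (0:ℝ))
      = ((∑ i, r i • EuclideanSpace.single i (1:ℝ) : E), (0:ℝ)) := by
    intro r
    refine Prod.ext ?_ ?_
    · rw [Prod.fst_sum]
      simp
    · rw [Prod.snd_sum]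
      simp
  have hfd0 : ∀ p : E × ℝ, p ∉ tsupport φ → fderiv ℝ φ p = 0 := by
    intro p hp
    by_contra h
    exact hp (support_fderiv_subset (𝕜 := ℝ) (Function.mem_support.mpr h))
  have hφ0 : ∀ p : E × ℝ, p ∉ tsupport φ → φ p = 0 := fun p hp =>
    image_eq_zero_of_notMem_tsupport hp
  -- pointwise decomposition
  have hpt : ∀ p : E × ℝ,
      fderiv ℝ φ p ((-(c p.2) * ‖p.1‖ ^ (-(m:ℝ))) • p.1, ‖p.1‖ ^ ((1:ℝ)-(m:ℝ)))
      = (∑ i, (fderiv ℝ φ p ((EuclideanSpace.single i (1:ℝ) : E), (0:ℝ)) * (c p.2 * W p.1 i)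
            + φ p * (c p.2 * fderiv ℝ (fun y : E => W y i) p.1 (EuclideanSpace.single i (1:ℝ)))))
        + fderiv ℝ φ p ((0:E), (1:ℝ)) * G0 p.1 := by
    intro p
    by_cases hp : p ∈ tsupport φ
    · have hxU : p.1 ∈ U := hKU ⟨p, hp, rfl⟩
      have hxA : p.1 ∈ A := hUA hxU
      have hbsum : ∑ i, φ p * (c p.2 *
          fderiv ℝ (fun y : E => W y i) p.1 (EuclideanSpace.single i (1:ℝ))) = 0 := by
        rw [← Finset.mul_sum, ← Finset.mul_sum, hdiv p.1 hxU, mul_zero, mul_zero]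
      have hvec : ((-(c p.2) * ‖p.1‖ ^ (-(m:ℝ))) • p.1, ‖p.1‖ ^ ((1:ℝ)-(m:ℝ)))
          = (∑ i, (c p.2 * W p.1 i) • ((EuclideanSpace.single i (1:ℝ) : E), (0:ℝ)))
            + G0 p.1 • ((0:E), (1:ℝ)) := by
        rw [hsum]
        have h1 : ∑ i, (c p.2 * W p.1 i) • (EuclideanSpace.single i (1:ℝ) : E)
            = c p.2 • W p.1 := by
          rw [← hbasis (c p.2 • W p.1)]
          refine Finset.sum_congr rfl fun i _ => ?_
          congr 1
        have h2 : c p.2 • W p.1 = (-(c p.2) * ‖p.1‖ ^ (-(m:ℝ))) • p.1 := by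
          rw [hWv p.1 hxU]
          show c p.2 • ((-(q p.1 ^ β)) • p.1) = _
          rw [smul_smul, hbridge1 p.1 hxA]
          ring_nf
        have h3 : G0 p.1 = ‖p.1‖ ^ ((1:ℝ)-(m:ℝ)) := by
          show χ p.1 * q p.1 ^ γ = _
          rw [hχ1 hxU, hbridge2 p.1 hxA]
          simp
        rw [h1, h2, h3]
        simp [Prod.ext_iff, Prod.smul_mk]
      rw [hvec, map_add, map_sum]
      rw [Finset.sum_add_distrib, hbsum, add_zero]
      congr 1
      · refine Finset.sum_congr rfl fun i _ => ?_
        rw [_root_.map_smul, smul_eq_mul, mul_comm]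
      · rw [_root_.map_smul, smul_eq_mul, mul_comm]
    · rw [hfd0 p hp, hφ0 p hp]
      simp
  -- integrability helper
  have hint : ∀ f : E × ℝ → ℝ, Continuous f → (∀ p ∉ tsupport φ, f p = 0) →
      Integrable f (volume : Measure (E × ℝ)) := by
    intro f hf h0
    exact hf.integrable_of_hasCompactSupport (HasCompactSupport.intro hφc h0)
  have hφdiff : Differentiable ℝ φ := hφ.differentiable (by simp)
  have hfderivφ : Continuous fun p : E × ℝ => fderiv ℝ φ p := hφ.continuous_fderiv (by simp)
  have happ : ∀ V₀ : E × ℝ, Continuous fun p : E × ℝ => fderiv ℝ φ p V₀ := fun V₀ =>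
    hfderivφ.clm_apply continuous_const
  have hWcont : Continuous W := hWsm.continuous
  have hWi : ∀ i : Fin m, ContDiff ℝ 1 (fun y : E => W y i) := by
    intro i
    exact (EuclideanSpace.proj (𝕜 := ℝ) i).contDiff.comp hWsm
  have hWicont : ∀ i : Fin m, Continuous fun p : E × ℝ => c p.2 * W p.1 i := fun i =>
    (hc.comp continuous_snd).mul (((hWi i).continuous).comp continuous_fst)
  have hdWicont : ∀ i : Fin m, Continuous fun p : E × ℝ =>
      c p.2 * fderiv ℝ (fun y : E => W y i) p.1 (EuclideanSpace.single i (1:ℝ)) := fun i =>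
    (hc.comp continuous_snd).mul
      ((((hWi i).continuous_fderiv (by simp)).clm_apply continuous_const).comp continuous_fst)
  have hφcont : Continuous φ := hφ.continuous
  -- integration by parts in the direction (e i, 0)
  have hibp : ∀ i : Fin m,
      ∫ p : E × ℝ, φ p * (c p.2 * fderiv ℝ (fun y : E => W y i) p.1 (EuclideanSpace.single i (1:ℝ)))
      = -∫ p : E × ℝ, (fderiv ℝ φ p ((EuclideanSpace.single i (1:ℝ) : E), (0:ℝ)))
          * (c p.2 * W p.1 i) := by
    intro i
    have h := integral_bilinear_hasLineDerivAt_right_eq_neg_left_of_integrable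
      (μ := (volume : Measure (E × ℝ)))
      (B := ContinuousLinearMap.mul ℝ ℝ)
      (f := φ) (g := fun p : E × ℝ => c p.2 * W p.1 i)
      (f' := fun p : E × ℝ => fderiv ℝ φ p ((EuclideanSpace.single i (1:ℝ) : E), (0:ℝ)))
      (g' := fun p : E × ℝ => c p.2 * fderiv ℝ (fun y : E => W y i) p.1
        (EuclideanSpace.single i (1:ℝ)))
      (v := ((EuclideanSpace.single i (1:ℝ) : E), (0:ℝ)))
      (by
        apply hint _ ((happ _).mul (hWicont i))
        intro p hp
        rw [Pi.mul_apply, hfd0 p hp]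
        simp)
      (by
        apply hint _ (hφcont.mul (hdWicont i))
        intro p hp
        rw [Pi.mul_apply, hφ0 p hp, zero_mul])
      (by
        apply hint _ (hφcont.mul (hWicont i))
        intro p hp
        rw [Pi.mul_apply, hφ0 p hp, zero_mul])
      (fun p _ => ((hφdiff p).hasFDerivAt).hasLineDerivAt _)
      (fun p _ => ?_)
    · simpa using h
    · -- line derivative of g in direction (e i, 0)
      have h1 : HasLineDerivAt ℝ (fun y : E => W y i)
          (fderiv ℝ (fun y : E => W y i) p.1 (EuclideanSpace.single i (1:ℝ)))
          p.1 (EuclideanSpace.single i (1:ℝ)) :=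
        ((((hWi i).differentiable (by simp)) p.1).hasFDerivAt).hasLineDerivAt _
      have h2 := (h1 : HasDerivAt
        (fun t : ℝ => (fun y : E => W y i) (p.1 + t • EuclideanSpace.single i (1:ℝ))) _ 0).const_mul (c p.2)
      show HasDerivAt (fun t : ℝ => (fun p : E × ℝ => c p.2 * W p.1 i)
        (p + t • ((EuclideanSpace.single i (1:ℝ) : E), (0:ℝ)))) _ 0
      have h3 : (fun t : ℝ => (fun p : E × ℝ => c p.2 * W p.1 i)
          (p + t • ((EuclideanSpace.single i (1:ℝ) : E), (0:ℝ))))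
          = fun t : ℝ => c p.2 * W (p.1 + t • EuclideanSpace.single i (1:ℝ)) i := by
        funext t
        simp [Prod.smul_mk]
      rw [h3]
      exact h2
  -- integration by parts in the vertical direction
  have hB1 : ∫ p : E × ℝ, fderiv ℝ φ p ((0:E), (1:ℝ)) * G0 p.1 = 0 := by
    have h := integral_bilinear_hasLineDerivAt_right_eq_neg_left_of_integrable
      (μ := (volume : Measure (E × ℝ)))
      (B := ContinuousLinearMap.mul ℝ ℝ)
      (f := φ) (g := fun p : E × ℝ => G0 p.1)
      (f' := fun p : E × ℝ => fderiv ℝ φ p ((0:E), (1:ℝ)))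
      (g' := fun _ : E × ℝ => (0:ℝ))
      (v := ((0:E), (1:ℝ)))
      (by
        apply hint _ ((happ _).mul (hG0sm.continuous.comp continuous_fst))
        intro p hp
        rw [Pi.mul_apply, hfd0 p hp]
        simp)
      (by
        apply (integrable_zero _ _ _).congr
        simp
        exact Filter.EventuallyEq.rfl)
      (by
        apply hint _ (hφcont.mul (hG0sm.continuous.comp continuous_fst))
        intro p hp
        rw [Pi.mul_apply, hφ0 p hp, zero_mul])
      (fun p _ => ((hφdiff p).hasFDerivAt).hasLineDerivAt _)
      (fun p _ => ?_)
    · have h' : (0:ℝ) = -∫ p : E × ℝ, fderiv ℝ φ p ((0:E), (1:ℝ)) * G0 p.1 := by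
        simpa using h
      linarith [h']
    · show HasDerivAt (fun t : ℝ => (fun p : E × ℝ => G0 p.1)
        (p + t • (((0:E), (1:ℝ)) : E × ℝ))) (0:ℝ) 0
      have h3 : (fun t : ℝ => (fun p : E × ℝ => G0 p.1)
          (p + t • (((0:E), (1:ℝ)) : E × ℝ))) = fun _ : ℝ => G0 p.1 := by
        funext t
        simp [Prod.smul_mk]
      rw [h3]
      exact hasDerivAt_const _ _
  -- assembling
  have hInta : ∀ i : Fin m, Integrable (fun p : E × ℝ =>
      fderiv ℝ φ p ((EuclideanSpace.single i (1:ℝ) : E), (0:ℝ)) * (c p.2 * W p.1 i))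
      (volume : Measure (E × ℝ)) := by
    intro i
    apply hint _ ((happ _).mul (hWicont i))
    intro p hp
    rw [Pi.mul_apply, hfd0 p hp]
    simp
  have hIntb : ∀ i : Fin m, Integrable (fun p : E × ℝ =>
      φ p * (c p.2 * fderiv ℝ (fun y : E => W y i) p.1 (EuclideanSpace.single i (1:ℝ))))
      (volume : Measure (E × ℝ)) := by
    intro i
    apply hint _ (hφcont.mul (hdWicont i))
    intro p hp
    rw [Pi.mul_apply, hφ0 p hp, zero_mul]
  have hIntB1 : Integrable (fun p : E × ℝ => fderiv ℝ φ p ((0:E), (1:ℝ)) * G0 p.1)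
      (volume : Measure (E × ℝ)) := by
    apply hint _ ((happ _).mul (hG0sm.continuous.comp continuous_fst))
    intro p hp
    rw [Pi.mul_apply, hfd0 p hp]
    simp
  have hAll : (fun p : E × ℝ =>
      fderiv ℝ φ p ((-(c p.2) * ‖p.1‖ ^ (-(m:ℝ))) • p.1, ‖p.1‖ ^ ((1:ℝ)-(m:ℝ))))
      = fun p : E × ℝ =>
        (∑ i, (fderiv ℝ φ p ((EuclideanSpace.single i (1:ℝ) : E), (0:ℝ)) * (c p.2 * W p.1 i)
            + φ p * (c p.2 * fderiv ℝ (fun y : E => W y i) p.1 (EuclideanSpace.single i (1:ℝ)))))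
        + fderiv ℝ φ p ((0:E), (1:ℝ)) * G0 p.1 := funext hpt
  calc ∫ p : E × ℝ, fderiv ℝ φ p ((-(c p.2) * ‖p.1‖ ^ (-(m:ℝ))) • p.1, ‖p.1‖ ^ ((1:ℝ)-(m:ℝ)))
      = ∫ p : E × ℝ, ((∑ i, (fderiv ℝ φ p ((EuclideanSpace.single i (1:ℝ) : E), (0:ℝ))
            * (c p.2 * W p.1 i)
            + φ p * (c p.2 * fderiv ℝ (fun y : E => W y i) p.1 (EuclideanSpace.single i (1:ℝ)))))
        + fderiv ℝ φ p ((0:E), (1:ℝ)) * G0 p.1) := by rw [hAll]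
    _ = (∫ p : E × ℝ, (∑ i, (fderiv ℝ φ p ((EuclideanSpace.single i (1:ℝ) : E), (0:ℝ))
            * (c p.2 * W p.1 i)
            + φ p * (c p.2 * fderiv ℝ (fun y : E => W y i) p.1 (EuclideanSpace.single i (1:ℝ))))))
        + ∫ p : E × ℝ, fderiv ℝ φ p ((0:E), (1:ℝ)) * G0 p.1 := by
          apply integral_add _ hIntB1
          exact integrable_finset_sum _ (fun i _ => (hInta i).add (hIntb i))
    _ = (∑ i : Fin m, ∫ p : E × ℝ, (fderiv ℝ φ p ((EuclideanSpace.single i (1:ℝ) : E), (0:ℝ))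
            * (c p.2 * W p.1 i)
            + φ p * (c p.2 * fderiv ℝ (fun y : E => W y i) p.1 (EuclideanSpace.single i (1:ℝ)))))
        + 0 := by
          rw [hB1]
          congr 1
          exact integral_finset_sum _ (fun i _ => (hInta i).add (hIntb i))
    _ = 0 := by
      rw [add_zero]
      refine Finset.sum_eq_zero fun i _ => ?_
      rw [integral_add (hInta i) (hIntb i), hibp i]
      ring

lemma csign_contDiffAt (θ : ℝ) {z : ℝ} (hz : z ≠ 0) :
    ContDiffAt ℝ 1 (fun z : ℝ => Real.sign z * |z| ^ θ) z := by
  rcases hz.lt_or_gt with hz | hz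
  · have h2 : ContDiffAt ℝ 1 (fun y : ℝ => (-y) ^ θ) z :=
      (Real.contDiffAt_rpow_const_of_ne (x := -z) (p := θ) (by linarith)).comp z
        (contDiffAt_id.neg (n := 1))
    have h1 : ContDiffAt ℝ 1 (fun z : ℝ => (-1) * (-z) ^ θ) z := contDiffAt_const.mul h2
    apply h1.congr_of_eventuallyEq
    filter_upwards [eventually_lt_nhds hz] with y hy
    rw [Real.sign_of_neg hy, abs_of_neg hy]
  · have h1 : ContDiffAt ℝ 1 (fun z : ℝ => z ^ θ) z :=
      Real.contDiffAt_rpow_const_of_ne hz.ne'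
    apply h1.congr_of_eventuallyEq
    filter_upwards [eventually_gt_nhds hz] with y hy
    rw [Real.sign_of_pos hy, abs_of_pos hy, one_mul]


end Key


/-- the vector field `J(x,z) = (−x|x|^{1−n} sign(z)|z|^θ, |x|^{2−n})` on
`D = {1/2 < |x| < 1} ⊂ ℝ^{n−1} × ℝ` is continuous on `D`, `C¹` away from `{z = 0}`, and
divergence-free in the sense of distributions on `D`. -/
theorem stmt12 (θ : ℝ) (hθ : θ ∈ Set.Ioo (0:ℝ) 1) (m : ℕ) (hm : 1 ≤ m) (n : ℕ) (hn : n = m + 1)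
    (D : Set (EuclideanSpace ℝ (Fin m) × ℝ))
    (hD : D = {p : EuclideanSpace ℝ (Fin m) × ℝ | 1/2 < ‖p.1‖ ∧ ‖p.1‖ < 1})
    (J : EuclideanSpace ℝ (Fin m) × ℝ → EuclideanSpace ℝ (Fin m) × ℝ)
    (hJ : ∀ p, J p = ((-(Real.sign p.2 * |p.2| ^ θ) * ‖p.1‖ ^ ((1:ℝ) - n)) • p.1,
      ‖p.1‖ ^ ((2:ℝ) - n))) :
    ContinuousOn J D ∧
    ContDiffOn ℝ 1 J (D \ {p : EuclideanSpace ℝ (Fin m) × ℝ | p.2 = 0}) ∧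
    (∀ φ : EuclideanSpace ℝ (Fin m) × ℝ → ℝ, ContDiff ℝ (⊤ : ℕ∞) φ → HasCompactSupport φ →
      tsupport φ ⊆ D → ∫ p, fderiv ℝ φ p (J p) = 0) := by
  obtain ⟨hθ0, hθ1⟩ := hθ
  have hJfun : J = fun p : EuclideanSpace ℝ (Fin m) × ℝ =>
      (((-(Real.sign p.2 * |p.2| ^ θ) * ‖p.1‖ ^ ((1:ℝ) - n)) • p.1 : EuclideanSpace ℝ (Fin m)),
        (‖p.1‖ ^ ((2:ℝ) - n) : ℝ)) := funext hJ
  have hc : Continuous (fun z : ℝ => Real.sign z * |z| ^ θ) := csign_cont θ hθ0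
  have hnormpos : ∀ p : EuclideanSpace ℝ (Fin m) × ℝ, p ∈ D → 0 < ‖p.1‖ := by
    intro p hp
    rw [hD] at hp
    exact lt_trans (by norm_num) hp.1
  refine ⟨?_, ?_, ?_⟩
  · -- continuity
    rw [hJfun]
    have hnorm : ContinuousOn (fun p : EuclideanSpace ℝ (Fin m) × ℝ => ‖p.1‖) D :=
      (continuous_norm.comp continuous_fst).continuousOn
    have hr1 : ContinuousOn (fun p : EuclideanSpace ℝ (Fin m) × ℝ => ‖p.1‖ ^ ((1:ℝ) - n)) D :=
      hnorm.rpow_const (fun p hp => Or.inl (hnormpos p hp).ne')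
    have hr2 : ContinuousOn (fun p : EuclideanSpace ℝ (Fin m) × ℝ => ‖p.1‖ ^ ((2:ℝ) - n)) D :=
      hnorm.rpow_const (fun p hp => Or.inl (hnormpos p hp).ne')
    exact (((((hc.comp continuous_snd).continuousOn).neg).mul hr1).smul
      (continuous_fst.continuousOn)).prodMk hr2
  · -- C^1 away from z = 0
    rw [hJfun]
    intro p hp
    obtain ⟨hpD, hpz⟩ := hp
    have hz : p.2 ≠ 0 := fun h => hpz h
    have hx0 : p.1 ≠ (0 : EuclideanSpace ℝ (Fin m)) := by
      intro h
      have := hnormpos p hpD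
      rw [h] at this
      simp at this
    apply ContDiffAt.contDiffWithinAt
    have hnormat : ContDiffAt ℝ 1 (fun p : EuclideanSpace ℝ (Fin m) × ℝ => ‖p.1‖) p :=
      (contDiffAt_norm (𝕜 := ℝ) hx0).comp p contDiffAt_fst
    have hr1 : ContDiffAt ℝ 1 (fun p : EuclideanSpace ℝ (Fin m) × ℝ => ‖p.1‖ ^ ((1:ℝ) - n)) p :=
      hnormat.rpow_const_of_ne (hnormpos p hpD).ne'
    have hr2 : ContDiffAt ℝ 1 (fun p : EuclideanSpace ℝ (Fin m) × ℝ => ‖p.1‖ ^ ((2:ℝ) - n)) p :=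
      hnormat.rpow_const_of_ne (hnormpos p hpD).ne'
    have hcc : ContDiffAt ℝ 1 (fun p : EuclideanSpace ℝ (Fin m) × ℝ =>
        Real.sign p.2 * |p.2| ^ θ) p :=
      (csign_contDiffAt θ hz).comp p contDiffAt_snd
    exact ((hcc.neg.mul hr1).smul contDiffAt_fst).prodMk hr2
  · -- divergence free
    intro φ hφ hφc hφs
    have he1 : (1:ℝ) - (n:ℝ) = -(m:ℝ) := by rw [hn]; push_cast; ring
    have he2 : (2:ℝ) - (n:ℝ) = (1:ℝ) - (m:ℝ) := by rw [hn]; push_cast; ring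
    have hgoal : (fun p : EuclideanSpace ℝ (Fin m) × ℝ => fderiv ℝ φ p (J p))
        = fun p : EuclideanSpace ℝ (Fin m) × ℝ => fderiv ℝ φ p
            ((-(Real.sign p.2 * |p.2| ^ θ) * ‖p.1‖ ^ (-(m:ℝ))) • p.1,
              ‖p.1‖ ^ ((1:ℝ) - (m:ℝ))) := by
      funext p
      rw [hJ p, he1, he2]
    rw [hgoal]
    apply key3 θ hθ0 hm φ hφ hφc
    rw [hD] at hφs
    exact hφs
end
end
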